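/- arXiv:0910.4573 — 3 statements merged into one kernel-verified Lean document; each statement's English description precedes it below -/
import Mathlib

section
/- Let a_n denote the number of column-convex hexagonal-celled polyominoes with area n (counted up to translation, with a_0 = 0). Then in the ring of formal power series ℚ⟦q⟧ one has the identity (1 − 6q + 10q² − 7q³ + q⁴) · (∑_{n≥0} a_n qⁿ) = q − 3q² + 3q³ − q⁴, i.e. the area generating function of column-convex polyominoes equals q(1−q)³ / (1 − 6q + 10q² − 7q³ + q⁴). -/
open Finset Filter

noncomputable section

/-- A cell of the hexagonal lattice, modelled as a point of ℤ². -/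
abbrev Cell : Type := ℤ × ℤ

/-- Hexagonal adjacency on ℤ². -/
def HexAdj (a b : Cell) : Prop :=
  (b.1 - a.1, b.2 - a.2) ∈
    ({(1,0), (-1,0), (0,1), (0,-1), (1,1), (-1,-1)} : Set (ℤ × ℤ))

/-- A (hexagonal-celled) polyomino: a finite nonempty set of cells,
connected under hexagonal adjacency. -/
def IsPolyomino (P : Finset Cell) : Prop :=
  P.Nonempty ∧ ∀ a ∈ P, ∀ b ∈ P,
    Relation.ReflTransGen (fun u v : Cell => u ∈ P ∧ v ∈ P ∧ HexAdj u v) a b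

/-- The canonical representative of a translation class: both the minimal
abscissa and the minimal ordinate are `0`. -/
def Normalized (P : Finset Cell) : Prop :=
  (∀ c ∈ P, 0 ≤ c.1 ∧ 0 ≤ c.2) ∧ (∃ c ∈ P, c.1 = 0) ∧ (∃ c ∈ P, c.2 = 0)

/-- Ordinates of the cells of the column of `P` at abscissa `x`. -/
def columnYs (P : Finset Cell) (x : ℤ) : Finset ℤ :=
  (P.filter (fun c => c.1 = x)).image Prod.snd

/-- Number of connected components (maximal runs of consecutive integers) of a
finite set of integers: each component is counted via its least element. -/
def numComponents (s : Finset ℤ) : ℕ := (s.filter (fun a => a - 1 ∉ s)).card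

/-- Every nonempty column has exactly one connected component. -/
def ColumnConvex (P : Finset Cell) : Prop :=
  ∀ x : ℤ, (columnYs P x).Nonempty → numComponents (columnYs P x) = 1

/-- `a` and `b` lie in the same connected component of `s`. -/
def SameComp (s : Finset ℤ) (a b : ℤ) : Prop :=
  a ∈ s ∧ b ∈ s ∧ ∀ c : ℤ, min a b ≤ c → c ≤ max a b → c ∈ s

/-- The leftmost nonempty column has exactly one connected component and, for
every pair of nonempty columns at consecutive abscissas `x`, `x+1`, every
connected component of the column at `x+1` contains a cell adjacent to some
cell of the column at `x`. -/
def RightwardSemiDirected (P : Finset Cell) : Prop :=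
  (∀ x : ℤ, (columnYs P x).Nonempty → (∀ x' : ℤ, x' < x → columnYs P x' = ∅) →
      numComponents (columnYs P x) = 1) ∧
  (∀ x : ℤ, (columnYs P x).Nonempty → (columnYs P (x+1)).Nonempty →
      ∀ b ∈ columnYs P (x+1), ∃ b' ∈ columnYs P (x+1),
        SameComp (columnYs P (x+1)) b b' ∧
        ∃ c ∈ columnYs P x, HexAdj (x, c) (x+1, b'))

/-- The cells of the gap(s) of a column: the integers between the least and the
greatest element that do not belong to the column. -/
def gapCells (s : Finset ℤ) : Finset ℤ :=
  Finset.Icc (WithTop.untopD 0 s.min) (WithBot.unbotD 0 s.max) \ s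

def gapSize (s : Finset ℤ) : ℕ := (gapCells s).card

/-- Level `m` cheesy polyomino. -/
def IsCheesy (m : ℕ) (P : Finset Cell) : Prop :=
  IsPolyomino P ∧ RightwardSemiDirected P ∧
  ∀ x : ℤ, numComponents (columnYs P x) ≤ 2 ∧
    (numComponents (columnYs P x) = 2 → gapSize (columnYs P x) ≤ m)

/-- Height of a (nonempty) column: max − min + 1. -/
def heightN (s : Finset ℤ) : ℕ :=
  (WithBot.unbotD 0 s.max - WithTop.untopD 0 s.min + 1).toNat

/-- The maximal abscissa of a polyomino. -/
def maxX (P : Finset Cell) : ℤ := WithBot.unbotD 0 (P.image Prod.fst).max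

/-- The last column (ordinates of the column of maximal abscissa). -/
def lastCol (P : Finset Cell) : Finset ℤ := columnYs P (maxX P)

/-- Number of column-convex polyominoes with area `n`, counted up to translation. -/
def ccCount (n : ℕ) : ℕ :=
  Nat.card {P : Finset Cell // IsPolyomino P ∧ ColumnConvex P ∧ Normalized P ∧ P.card = n}

/-!
A normalized column-convex polyomino is a sequence of vertical segments in the columns
`0, …, m`, each touching the previous one. A segment of height `k` with lowest ordinate `b`
touches the segment `[β, τ]` to its left iff `β - k + 1 ≤ b ≤ τ + 1`, which leaves
`(τ - β + 1) + k` positions. Removing the last column therefore shows, for `a n` the number of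
polyominoes of area `n` and `w n` the number of those with a marked cell in the last column,
`a n = 1 + ∑ₖ (w (n - k) + k a (n - k))` and `w n = n + ∑ₖ k (w (n - k) + k a (n - k))`, the
sums running over `1 ≤ k < n`. For the generating series `A` and `W` this reads
`A = S₀ (1 + W) + S₁ A` and `W = S₁ (1 + W) + S₂ A`, where `S₀ = q/(1-q)`, `S₁ = q/(1-q)²` and
`S₂ = q(1+q)/(1-q)³` are the series of `1`, `n` and `n²`; eliminating `W` gives the identity.
-/

namespace HexAdj

lemma iff {a b : Cell} :
    HexAdj a b ↔ (b.1 = a.1 + 1 ∧ b.2 = a.2) ∨ (b.1 = a.1 - 1 ∧ b.2 = a.2) ∨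
      (b.1 = a.1 ∧ b.2 = a.2 + 1) ∨ (b.1 = a.1 ∧ b.2 = a.2 - 1) ∨
      (b.1 = a.1 + 1 ∧ b.2 = a.2 + 1) ∨ (b.1 = a.1 - 1 ∧ b.2 = a.2 - 1) := by
  simp only [HexAdj, Set.mem_insert_iff, Set.mem_singleton_iff, Prod.mk.injEq]
  omega

lemma symm {a b : Cell} (h : HexAdj a b) : HexAdj b a := by
  rw [HexAdj.iff] at h ⊢; omega

lemma fst_le {a b : Cell} (h : HexAdj a b) : b.1 ≤ a.1 + 1 := by
  rw [HexAdj.iff] at h; omega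

lemma snd_le {a b : Cell} (h : HexAdj a b) : b.2 ≤ a.2 + 1 := by
  rw [HexAdj.iff] at h; omega

end HexAdj

namespace HexPolyomino

variable {P : Finset Cell}

abbrev AdjIn (P : Finset Cell) (u v : Cell) : Prop := u ∈ P ∧ v ∈ P ∧ HexAdj u v

instance (P : Finset Cell) : Std.Symm (AdjIn P) :=
  ⟨fun _ _ h => ⟨h.2.1, h.1, h.2.2.symm⟩⟩

lemma exists_mem_apply_eq_of_reflTransGen {f : Cell → ℤ}
    (hf : ∀ u v, HexAdj u v → f v ≤ f u + 1) {a b : Cell}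
    (h : Relation.ReflTransGen (AdjIn P) a b) (ha : a ∈ P) {c : ℤ} (hac : f a ≤ c)
    (hcb : c ≤ f b) : ∃ p ∈ P, f p = c := by
  induction h with
  | refl => exact ⟨a, ha, le_antisymm hac hcb⟩
  | @tail b d _ hbd ih =>
    rcases le_or_gt c (f b) with hcb' | hbc
    · exact ih hcb'
    · exact ⟨d, hbd.2.1, le_antisymm (by linarith [hf b d hbd.2.2]) hcb⟩

lemma _root_.IsPolyomino.exists_mem_apply_eq (hP : IsPolyomino P) {f : Cell → ℤ}
    (hf : ∀ u v, HexAdj u v → f v ≤ f u + 1)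
    {a b : Cell} (ha : a ∈ P) (hb : b ∈ P) {c : ℤ} (hac : f a ≤ c) (hcb : c ≤ f b) :
    ∃ p ∈ P, f p = c :=
  exists_mem_apply_eq_of_reflTransGen hf (hP.2 a ha b hb) ha hac hcb

/-- `f` takes every value between `0` and `f c` on `P`. -/
lemma _root_.IsPolyomino.apply_lt_card (hP : IsPolyomino P) {f : Cell → ℤ}
    (hf : ∀ u v, HexAdj u v → f v ≤ f u + 1)
    {a c : Cell} (ha : a ∈ P) (ha0 : f a = 0) (hc : c ∈ P) : f c < P.card := by
  have hsub : Finset.Icc 0 (f c) ⊆ P.image f := fun j hj => by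
    rw [Finset.mem_Icc] at hj
    obtain ⟨p, hp, rfl⟩ := hP.exists_mem_apply_eq hf ha hc (ha0 ▸ hj.1) hj.2
    exact Finset.mem_image_of_mem f hp
  have := (Finset.card_le_card hsub).trans Finset.card_image_le
  rw [Int.card_Icc] at this
  omega

/-! ### Columns -/

lemma mem_columnYs {x y : ℤ} : y ∈ columnYs P x ↔ (x, y) ∈ P := by
  simp [columnYs]

lemma columnYs_eq_empty_iff {x : ℤ} :
    columnYs P x = ∅ ↔ ∀ c ∈ P, c.1 ≠ x := by
  simp [columnYs, Finset.filter_eq_empty_iff]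

lemma ext_columnYs {Q : Finset Cell} (h : ∀ x, columnYs P x = columnYs Q x) : P = Q := by
  ext ⟨x, y⟩
  rw [← mem_columnYs, ← mem_columnYs, h]

lemma card_filter_fst_eq (P : Finset Cell) (x : ℤ) :
    (P.filter (·.1 = x)).card = (columnYs P x).card := by
  refine (Finset.card_image_of_injOn fun c hc d hd h => ?_).symm
  simp only [Finset.coe_filter, Set.mem_ofPred_eq] at hc hd
  exact Prod.ext (hc.2.trans hd.2.symm) h

def IsNonemptyIcc (s : Finset ℤ) : Prop := ∃ a b, a ≤ b ∧ s = Finset.Icc a b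

/-- Columns `s` at abscissa `x` and `t` at `x + 1` are linked when some cell of `t` is adjacent to
some cell of `s`: the neighbours of `(x, y)` in column `x + 1` are `(x + 1, y)` and
`(x + 1, y + 1)`. -/
def Linked (s t : Finset ℤ) : Prop := ∃ y ∈ s, y ∈ t ∨ y + 1 ∈ t

lemma numComponents_Icc {a b : ℤ} (hab : a ≤ b) : numComponents (Finset.Icc a b) = 1 := by
  rw [numComponents, Finset.card_eq_one]
  refine ⟨a, Finset.ext fun c => ?_⟩
  simp only [Finset.mem_filter, Finset.mem_Icc, Finset.mem_singleton]
  omega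

lemma isNonemptyIcc_of_numComponents_eq_one {s : Finset ℤ} (hs : s.Nonempty)
    (h : numComponents s = 1) : IsNonemptyIcc s := by
  set a := s.min' hs
  have hpred : ∀ z ∈ s, z ≠ a → z - 1 ∈ s := by
    intro z hz hza
    by_contra hz1
    have hmin : a - 1 ∉ s := fun h' => by have := s.min'_le _ h'; omega
    have := Finset.card_le_one.mp h.le z (Finset.mem_filter.mpr ⟨hz, hz1⟩) a
      (Finset.mem_filter.mpr ⟨s.min'_mem hs, hmin⟩)
    exact hza this
  have hdown : ∀ k : ℕ, ∀ z ∈ s, a ≤ z - k → z - k ∈ s := by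
    intro k
    induction k with
    | zero => simpa using fun z hz _ => hz
    | succ k ih =>
      intro z hz hk
      have h' := hpred _ (ih z hz (by omega)) (by omega)
      rwa [Nat.cast_succ, ← sub_sub]
  refine ⟨a, s.max' hs, s.min'_le _ (s.max'_mem hs), Finset.Subset.antisymm
    (fun y hy => Finset.mem_Icc.mpr ⟨s.min'_le y hy, s.le_max' y hy⟩) fun y hy => ?_⟩
  rw [Finset.mem_Icc] at hy
  have := hdown (s.max' hs - y).toNat _ (s.max'_mem hs) (by omega)
  rwa [Int.toNat_of_nonneg (by omega), sub_sub_cancel] at this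

lemma linked_Icc_iff {a b c d : ℤ} (hab : a ≤ b) (hcd : c ≤ d) :
    Linked (Finset.Icc a b) (Finset.Icc c d) ↔ c ≤ b + 1 ∧ a ≤ d := by
  simp only [Linked, Finset.mem_Icc]
  constructor
  · rintro ⟨y, hy, hy' | hy'⟩ <;> omega
  · intro h
    by_cases hcb : c ≤ b
    · exact ⟨max a c, by omega, Or.inl (by omega)⟩
    · exact ⟨b, by omega, Or.inr (by omega)⟩

lemma linked_columnYs_of_reflTransGen {a b : Cell}
    (h : Relation.ReflTransGen (AdjIn P) a b) {x : ℤ} (ha : a.1 ≤ x) (hb : x + 1 ≤ b.1) :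
    Linked (columnYs P x) (columnYs P (x + 1)) := by
  induction h with
  | refl => omega
  | @tail b d _ hbd ih =>
    rcases le_or_gt b.1 x with hbx | hxb
    · have hstep := HexAdj.iff.mp hbd.2.2
      have hb : (x, b.2) ∈ P := by rw [show x = b.1 by omega]; exact hbd.1
      have hd : (x + 1, d.2) ∈ P := by rw [show x + 1 = d.1 by omega]; exact hbd.2.1
      refine ⟨b.2, mem_columnYs.mpr hb, ?_⟩
      rcases (by omega : d.2 = b.2 ∨ d.2 = b.2 + 1) with hd2 | hd2
      · exact Or.inl (mem_columnYs.mpr (hd2 ▸ hd))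
      · exact Or.inr (mem_columnYs.mpr (hd2 ▸ hd))
    · exact ih hxb

lemma le_maxX {c : Cell} (hc : c ∈ P) : c.1 ≤ maxX P := by
  have hne : (P.image Prod.fst).Nonempty := ⟨c.1, Finset.mem_image_of_mem _ hc⟩
  rw [maxX, ← Finset.coe_max' hne, WithBot.unbotD_coe]
  exact Finset.le_max' _ _ (Finset.mem_image_of_mem _ hc)

lemma exists_fst_eq_maxX (hP : P.Nonempty) : ∃ c ∈ P, c.1 = maxX P := by
  have hne : (P.image Prod.fst).Nonempty := hP.image _
  obtain ⟨c, hc, hcm⟩ := Finset.mem_image.mp (Finset.max'_mem _ hne)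
  exact ⟨c, hc, by rw [maxX, ← Finset.coe_max' hne, WithBot.unbotD_coe, hcm]⟩

lemma maxX_eq_of {m : ℤ} (hle : ∀ c ∈ P, c.1 ≤ m) {c : Cell} (hc : c ∈ P)
    (hcm : c.1 = m) : maxX P = m := by
  obtain ⟨d, hd, hdm⟩ := exists_fst_eq_maxX ⟨c, hc⟩
  have := le_maxX hc
  have := hle d hd
  omega

lemma reflTransGen_of_Icc_subset {x y y' : ℤ} (hyy' : y ≤ y')
    (h : Finset.Icc y y' ⊆ columnYs P x) :
    Relation.ReflTransGen (AdjIn P) (x, y) (x, y') := by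
  induction y', hyy' using Int.leInduction with
  | base => exact .refl
  | succ z hyz ih =>
    have hmem : ∀ w, y ≤ w → w ≤ z + 1 → (x, w) ∈ P := fun w h1 h2 =>
      mem_columnYs.mp (h (Finset.mem_Icc.mpr ⟨h1, h2⟩))
    refine (ih fun w hw => ?_).tail ⟨hmem z hyz (by omega), hmem (z + 1) (by omega) le_rfl,
      HexAdj.iff.mpr (by omega)⟩
    rw [Finset.mem_Icc] at hw
    exact mem_columnYs.mpr (hmem w hw.1 (by omega))

lemma reflTransGen_of_isNonemptyIcc {x y y' : ℤ}
    (hx : IsNonemptyIcc (columnYs P x)) (hy : y ∈ columnYs P x) (hy' : y' ∈ columnYs P x) :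
    Relation.ReflTransGen (AdjIn P) (x, y) (x, y') := by
  obtain ⟨a, b, -, hab⟩ := hx
  have hsub : ∀ {u v}, u ∈ columnYs P x → v ∈ columnYs P x →
      Finset.Icc u v ⊆ columnYs P x := fun hu hv w hw => by
    rw [hab, Finset.mem_Icc] at hu hv ⊢
    rw [Finset.mem_Icc] at hw
    omega
  rcases le_total y y' with h | h
  · exact reflTransGen_of_Icc_subset h (hsub hy hy')
  · exact symm (reflTransGen_of_Icc_subset h (hsub hy' hy))

/-- Column-by-column description of the column-convex polyominoes occupying the abscissas
`0, …, m`. -/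
def ColumnChain (P : Finset Cell) (m : ℤ) : Prop :=
  (∀ x, 0 ≤ x → x ≤ m → IsNonemptyIcc (columnYs P x)) ∧
  (∀ x, (x < 0 ∨ m < x) → columnYs P x = ∅) ∧
  (∀ x, 0 ≤ x → x < m → Linked (columnYs P x) (columnYs P (x + 1)))

namespace ColumnChain

variable {m : ℤ}

lemma fst_mem_Icc (h : ColumnChain P m) {c : Cell} (hc : c ∈ P) : 0 ≤ c.1 ∧ c.1 ≤ m := by
  by_contra hout
  have := h.2.1 c.1 (by omega)
  rw [columnYs_eq_empty_iff] at this
  exact this c hc rfl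

lemma columnYs_nonempty (h : ColumnChain P m) {x : ℤ} (h0 : 0 ≤ x) (hm : x ≤ m) :
    (columnYs P x).Nonempty := by
  obtain ⟨a, b, hab, he⟩ := h.1 x h0 hm
  exact he ▸ Finset.nonempty_Icc.mpr hab

lemma maxX_eq (h : ColumnChain P m) (hm : 0 ≤ m) : maxX P = m := by
  obtain ⟨y, hy⟩ := h.columnYs_nonempty hm le_rfl
  exact maxX_eq_of (fun c hc => (h.fst_mem_Icc hc).2) (mem_columnYs.mp hy) rfl

lemma columnConvex (h : ColumnChain P m) : ColumnConvex P := by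
  intro x hx
  have hxm : 0 ≤ x ∧ x ≤ m := by
    by_contra hout
    rw [h.2.1 x (by omega)] at hx
    exact Finset.not_nonempty_empty hx
  obtain ⟨a, b, hab, he⟩ := h.1 x hxm.1 hxm.2
  rw [he]
  exact numComponents_Icc hab

lemma isPolyomino (h : ColumnChain P m) (hm : 0 ≤ m) : IsPolyomino P := by
  obtain ⟨y₀, hy₀⟩ := h.columnYs_nonempty le_rfl hm
  have hreach : ∀ x, 0 ≤ x → x ≤ m → ∀ y ∈ columnYs P x,
      Relation.ReflTransGen (AdjIn P) (0, y₀) (x, y) := by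
    intro x hx
    induction x, hx using Int.leInduction with
    | base => exact fun _ y hy => reflTransGen_of_isNonemptyIcc (h.1 0 le_rfl hm) hy₀ hy
    | succ x hx ih =>
      intro hxm y hy
      obtain ⟨z, hz, hz'⟩ := h.2.2 x hx (by omega)
      obtain ⟨z', hz'mem, hzz'⟩ :
          ∃ z', z' ∈ columnYs P (x + 1) ∧ (z' = z ∨ z' = z + 1) := by
        rcases hz' with hz' | hz'
        · exact ⟨z, hz', Or.inl rfl⟩
        · exact ⟨z + 1, hz', Or.inr rfl⟩
      have hstep : AdjIn P (x, z) (x + 1, z') :=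
        ⟨mem_columnYs.mp hz, mem_columnYs.mp hz'mem, HexAdj.iff.mpr (by omega)⟩
      exact ((ih (by omega) z hz).tail hstep).trans
        (reflTransGen_of_isNonemptyIcc (h.1 (x + 1) (by omega) hxm) hz'mem hy)
  refine ⟨⟨_, mem_columnYs.mp hy₀⟩, fun a ha b hb => ?_⟩
  have hA := h.fst_mem_Icc ha
  have hB := h.fst_mem_Icc hb
  exact (symm (hreach a.1 hA.1 hA.2 a.2 (mem_columnYs.mpr ha))).trans
    (hreach b.1 hB.1 hB.2 b.2 (mem_columnYs.mpr hb))

end ColumnChain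

lemma columnYs_nonempty_of_isPolyomino (hP : IsPolyomino P) (hN : Normalized P)
    {x : ℤ} (h0 : 0 ≤ x) (hx : x ≤ maxX P) : (columnYs P x).Nonempty := by
  obtain ⟨a, ha, ha0⟩ := hN.2.1
  obtain ⟨b, hb, hbm⟩ := exists_fst_eq_maxX hP.1
  obtain ⟨p, hp, rfl⟩ :=
    hP.exists_mem_apply_eq (fun _ _ h => h.fst_le) (c := x) ha hb (by omega) (by omega)
  exact ⟨p.2, mem_columnYs.mpr hp⟩

lemma columnChain_maxX (hP : IsPolyomino P) (hcc : ColumnConvex P)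
    (hN : Normalized P) : ColumnChain P (maxX P) := by
  refine ⟨fun x h0 hx => ?_, fun x hx => ?_, fun x h0 hx => ?_⟩
  · have hne := columnYs_nonempty_of_isPolyomino hP hN h0 hx
    exact isNonemptyIcc_of_numComponents_eq_one hne (hcc x hne)
  · rw [columnYs_eq_empty_iff]
    intro c hc hcx
    have := le_maxX hc
    have := (hN.1 c hc).1
    omega
  · obtain ⟨y, hy⟩ := columnYs_nonempty_of_isPolyomino hP hN h0 hx.le
    obtain ⟨y', hy'⟩ := columnYs_nonempty_of_isPolyomino hP hN (x := x + 1) (by omega) hx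
    exact linked_columnYs_of_reflTransGen (hP.2 _ (mem_columnYs.mp hy) _ (mem_columnYs.mp hy'))
      le_rfl le_rfl

/-! ### Vertical shifts and segments -/

def shiftY (v : ℤ) (P : Finset Cell) : Finset Cell :=
  P.map (Equiv.addRight ((0 : ℤ), v)).toEmbedding

lemma mem_shiftY {v : ℤ} {c : Cell} :
    c ∈ shiftY v P ↔ (c.1, c.2 - v) ∈ P := by
  simp only [shiftY, Finset.mem_map_equiv, Equiv.addRight_symm_apply]
  convert Iff.rfl using 2
  ext <;> simp [sub_eq_add_neg]

@[simp]
lemma card_shiftY (v : ℤ) (P : Finset Cell) : (shiftY v P).card = P.card :=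
  Finset.card_map _

lemma shiftY_shiftY (v w : ℤ) (P : Finset Cell) : shiftY v (shiftY w P) = shiftY (v + w) P := by
  ext c
  simp only [mem_shiftY, sub_add_eq_sub_sub_swap, sub_right_comm]

@[simp]
lemma shiftY_zero (P : Finset Cell) : shiftY 0 P = P := by
  ext c
  simp [mem_shiftY]

lemma columnYs_shiftY (v : ℤ) (P : Finset Cell) (x : ℤ) :
    columnYs (shiftY v P) x = (columnYs P x).map (addRightEmbedding v) := by
  ext y
  simp only [mem_columnYs, mem_shiftY, Finset.mem_map, addRightEmbedding_apply]
  refine ⟨fun h => ⟨y - v, h, sub_add_cancel y v⟩, ?_⟩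
  rintro ⟨z, hz, rfl⟩
  simpa using hz

lemma ColumnChain.shiftY {m : ℤ} (h : ColumnChain P m) (v : ℤ) :
    ColumnChain (shiftY v P) m := by
  refine ⟨fun x h0 hx => ?_, fun x hx => ?_, fun x h0 hx => ?_⟩
  · obtain ⟨a, b, hab, he⟩ := h.1 x h0 hx
    exact ⟨a + v, b + v, by omega, by rw [columnYs_shiftY, he, Finset.map_add_right_Icc]⟩
  · rw [columnYs_shiftY, h.2.1 x hx, Finset.map_empty]
  · obtain ⟨y, hy, hy'⟩ := h.2.2 x h0 hx
    refine ⟨y + v, ?_, ?_⟩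
    · rw [columnYs_shiftY]; exact Finset.mem_map_of_mem _ hy
    · simp only [columnYs_shiftY, Finset.mem_map, addRightEmbedding_apply]
      rcases hy' with hy' | hy'
      · exact Or.inl ⟨y, hy', rfl⟩
      · exact Or.inr ⟨y + 1, hy', by ring⟩

def strip (x₀ b : ℤ) (k : ℕ) : Finset Cell :=
  (Finset.Icc b (b + k - 1)).map ⟨fun y => (x₀, y), fun _ _ h => (Prod.mk.inj h).2⟩

lemma mem_strip {x₀ b : ℤ} {k : ℕ} {c : Cell} :
    c ∈ strip x₀ b k ↔ c.1 = x₀ ∧ b ≤ c.2 ∧ c.2 ≤ b + k - 1 := by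
  obtain ⟨x, y⟩ := c
  simp only [strip, Finset.mem_map, Finset.mem_Icc]
  constructor
  · rintro ⟨y, hy, ⟨⟩⟩; exact ⟨rfl, hy⟩
  · rintro ⟨rfl, hy⟩; exact ⟨y, hy, rfl⟩

lemma maxX_strip {x₀ b : ℤ} {k : ℕ} (hk : 1 ≤ k) : maxX (strip x₀ b k) = x₀ :=
  maxX_eq_of (fun c hc => (mem_strip.mp hc).1.le)
    (mem_strip (c := (x₀, b)) |>.mpr ⟨rfl, le_rfl, by omega⟩) rfl

@[simp]
lemma card_strip (x₀ b : ℤ) (k : ℕ) : (strip x₀ b k).card = k := by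
  rw [strip, Finset.card_map, Int.card_Icc]
  omega

lemma columnYs_strip (x₀ b : ℤ) (k : ℕ) (x : ℤ) :
    columnYs (strip x₀ b k) x = if x = x₀ then Finset.Icc b (b + k - 1) else ∅ := by
  ext y
  rw [mem_columnYs, mem_strip]
  split_ifs with hx <;> simp [hx]

lemma strip_eq_filter {x₀ b : ℤ} {k : ℕ}
    (h : columnYs P x₀ = Finset.Icc b (b + k - 1)) : strip x₀ b k = P.filter (·.1 = x₀) := by
  ext ⟨x, y⟩
  rw [mem_strip, Finset.mem_filter, ← mem_columnYs]
  constructor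
  · rintro ⟨rfl, hy⟩; exact ⟨h ▸ Finset.mem_Icc.mpr hy, rfl⟩
  · rintro ⟨hy, rfl⟩; exact ⟨rfl, Finset.mem_Icc.mp (h ▸ hy)⟩

lemma columnYs_union (P Q : Finset Cell) (x : ℤ) :
    columnYs (P ∪ Q) x = columnYs P x ∪ columnYs Q x := by
  ext y
  simp only [mem_columnYs, Finset.mem_union]

def minY (P : Finset Cell) : ℤ := WithTop.untopD 0 (P.image Prod.snd).min

lemma minY_le {c : Cell} (hc : c ∈ P) : minY P ≤ c.2 := by
  have hne : (P.image Prod.snd).Nonempty := ⟨c.2, Finset.mem_image_of_mem _ hc⟩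
  rw [minY, ← Finset.coe_min' hne, WithTop.untopD_coe]
  exact Finset.min'_le _ _ (Finset.mem_image_of_mem _ hc)

lemma exists_snd_eq_minY (hP : P.Nonempty) : ∃ c ∈ P, c.2 = minY P := by
  have hne : (P.image Prod.snd).Nonempty := hP.image _
  obtain ⟨c, hc, hcm⟩ := Finset.mem_image.mp (Finset.min'_mem _ hne)
  exact ⟨c, hc, by rw [minY, ← Finset.coe_min' hne, WithTop.untopD_coe, hcm]⟩

lemma minY_eq_zero (hN : Normalized P) : minY P = 0 := by
  obtain ⟨c, hc, hc0⟩ := hN.2.2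
  obtain ⟨d, hd, hdm⟩ := exists_snd_eq_minY ⟨c, hc⟩
  have := minY_le hc
  have := (hN.1 d hd).2
  omega

lemma minY_shiftY (hP : P.Nonempty) (v : ℤ) :
    minY (shiftY v P) = minY P + v := by
  obtain ⟨c, hc, hcm⟩ := exists_snd_eq_minY hP
  obtain ⟨d, hd, hdm⟩ := exists_snd_eq_minY (P := shiftY v P) (hP.map)
  have h1 := minY_le (P := shiftY v P) (c := (c.1, c.2 + v)) (mem_shiftY.mpr (by simpa using hc))
  have h2 := minY_le (mem_shiftY.mp hd)
  dsimp only at h1 h2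
  omega

lemma normalized_shiftY_neg_minY (hfst : ∀ c ∈ P, 0 ≤ c.1)
    {c₀ : Cell} (hc₀ : c₀ ∈ P) (hc₀0 : c₀.1 = 0) : Normalized (shiftY (-minY P) P) := by
  obtain ⟨d, hd, hdm⟩ := exists_snd_eq_minY ⟨c₀, hc₀⟩
  refine ⟨fun c hc => ?_, ⟨(c₀.1, c₀.2 - minY P), ?_, hc₀0⟩, ⟨(d.1, 0), ?_, rfl⟩⟩
  · rw [mem_shiftY] at hc
    have := hfst _ hc
    have := minY_le hc
    dsimp only at *
    omega
  · rw [mem_shiftY, sub_neg_eq_add, sub_add_cancel]; exact hc₀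
  · rw [mem_shiftY, zero_sub, neg_neg, ← hdm]; exact hd

def colMin (s : Finset ℤ) : ℤ := WithTop.untopD 0 s.min

def colMax (s : Finset ℤ) : ℤ := WithBot.unbotD 0 s.max

lemma colMin_Icc {a b : ℤ} (hab : a ≤ b) : colMin (Finset.Icc a b) = a := by
  have hne := Finset.nonempty_Icc.mpr hab
  rw [colMin, ← Finset.coe_min' hne, WithTop.untopD_coe]
  exact le_antisymm (Finset.min'_le _ _ (Finset.left_mem_Icc.mpr hab))
    (Finset.le_min' _ _ _ fun y hy => (Finset.mem_Icc.mp hy).1)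

lemma colMax_Icc {a b : ℤ} (hab : a ≤ b) : colMax (Finset.Icc a b) = b := by
  have hne := Finset.nonempty_Icc.mpr hab
  rw [colMax, ← Finset.coe_max' hne, WithBot.unbotD_coe]
  exact le_antisymm (Finset.max'_le _ _ _ fun y hy => (Finset.mem_Icc.mp hy).2)
    (Finset.le_max' _ _ (Finset.right_mem_Icc.mpr hab))

/-! ### Adding and removing the last column -/

def IsNormalCC (n : ℕ) (P : Finset Cell) : Prop :=
  IsPolyomino P ∧ ColumnConvex P ∧ Normalized P ∧ P.card = n

namespace IsNormalCC

variable {n : ℕ}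

lemma columnChain (h : IsNormalCC n P) : ColumnChain P (maxX P) :=
  columnChain_maxX h.1 h.2.1 h.2.2.1

lemma maxX_nonneg (h : IsNormalCC n P) : 0 ≤ maxX P := by
  obtain ⟨c, hc⟩ := h.1.1
  exact (h.2.2.1.1 c hc).1.trans (le_maxX hc)

lemma isNonemptyIcc_lastCol (h : IsNormalCC n P) : IsNonemptyIcc (lastCol P) :=
  h.columnChain.1 _ h.maxX_nonneg le_rfl

lemma one_le_card_lastCol (h : IsNormalCC n P) : 1 ≤ (lastCol P).card := by
  obtain ⟨a, b, hab, he⟩ := h.isNonemptyIcc_lastCol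
  rw [he, Int.card_Icc]
  omega

end IsNormalCC

/-- The ordinates `b` for which a column of height `k` with lowest ordinate `b`, placed right of
the last column of `P`, touches that column. -/
def admissibleBottoms (P : Finset Cell) (k : ℕ) : Finset ℤ :=
  Finset.Icc (colMin (lastCol P) - k + 1) (colMax (lastCol P) + 1)

lemma card_admissibleBottoms (h : IsNonemptyIcc (lastCol P)) (k : ℕ) :
    (admissibleBottoms P k).card = (lastCol P).card + k := by
  obtain ⟨a, b, hab, he⟩ := h
  rw [admissibleBottoms, he, colMin_Icc hab, colMax_Icc hab, Int.card_Icc, Int.card_Icc]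
  omega

/-- The shift `max 0 (-b)` keeps the result normalized when the new column reaches below `P`. -/
def appendCol (k : ℕ) (P : Finset Cell) (b : ℤ) : Finset Cell :=
  shiftY (max 0 (-b)) P ∪ strip (maxX P + 1) (b + max 0 (-b)) k

def dropLastCol (P : Finset Cell) : Finset Cell := P.filter (·.1 ≠ maxX P)

/-- The inverse of `appendCol`: the height of the last column, the remaining normalized
polyomino, and the lowest ordinate of the last column in the frame of the latter. -/
def splitLastCol (P : Finset Cell) : ℕ × Finset Cell × ℤ :=
  ((lastCol P).card, shiftY (-minY (dropLastCol P)) (dropLastCol P),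
    colMin (lastCol P) - minY (dropLastCol P))

lemma columnYs_appendCol (k : ℕ) (P : Finset Cell) (b x : ℤ) :
    columnYs (appendCol k P b) x = if x = maxX P + 1 then
      Finset.Icc (b + max 0 (-b)) (b + max 0 (-b) + k - 1)
    else columnYs (shiftY (max 0 (-b)) P) x := by
  rw [appendCol, columnYs_union, columnYs_strip]
  split_ifs with hx
  · have : columnYs (shiftY (max 0 (-b)) P) x = ∅ := by
      rw [columnYs_eq_empty_iff]
      intro c hc hcx
      have := le_maxX (mem_shiftY.mp hc)
      dsimp only at this
      omega
    rw [this, Finset.empty_union]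
  · rw [Finset.union_empty]

lemma columnYs_dropLastCol (P : Finset Cell) (x : ℤ) :
    columnYs (dropLastCol P) x = if x = maxX P then ∅ else columnYs P x := by
  ext y
  rw [mem_columnYs, dropLastCol, Finset.mem_filter]
  split_ifs with hx <;> simp [hx, mem_columnYs]

lemma card_dropLastCol_add (P : Finset Cell) :
    (dropLastCol P).card + (lastCol P).card = P.card := by
  rw [dropLastCol, lastCol, ← card_filter_fst_eq, add_comm]
  exact Finset.card_filter_add_card_filter_not _

variable {n k : ℕ} {b : ℤ}

lemma columnChain_appendCol {m : ℤ} (h : ColumnChain P m) (hm : 0 ≤ m) (hk : 1 ≤ k)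
    (hb : b ∈ admissibleBottoms P k) : ColumnChain (appendCol k P b) (m + 1) := by
  set s := max 0 (-b)
  have hM : maxX P = m := h.maxX_eq hm
  have hs := h.shiftY s
  refine ⟨fun x h0 hx => ?_, fun x hx => ?_, fun x h0 hx => ?_⟩
  · rw [columnYs_appendCol, hM]
    split_ifs with hxm
    · exact ⟨_, _, by omega, rfl⟩
    · exact hs.1 x h0 (by omega)
  · rw [columnYs_appendCol, hM, if_neg (by omega)]
    exact hs.2.1 x (by omega)
  · rw [columnYs_appendCol, columnYs_appendCol, hM, if_neg (by omega)]
    split_ifs with hxm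
    · obtain ⟨β, τ, hβτ, he⟩ := h.1 m hm le_rfl
      rw [admissibleBottoms, lastCol, hM, he, colMin_Icc hβτ, colMax_Icc hβτ,
        Finset.mem_Icc] at hb
      rw [show x = m by omega, columnYs_shiftY, he, Finset.map_add_right_Icc,
        linked_Icc_iff (by omega) (by omega)]
      omega
    · exact hs.2.2 x h0 (by omega)

lemma isNormalCC_appendCol (h : IsNormalCC n P) (hk : 1 ≤ k)
    (hb : b ∈ admissibleBottoms P k) : IsNormalCC (n + k) (appendCol k P b) := by
  set s := max 0 (-b)
  have hM := h.maxX_nonneg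
  have hC := columnChain_appendCol h.columnChain hM hk hb
  have hN := h.2.2.1
  have hshift : ∀ {c : Cell}, c ∈ P → (c.1, c.2 + s) ∈ appendCol k P b := fun hc =>
    Finset.mem_union_left _ (mem_shiftY.mpr (by simpa [s] using hc))
  refine ⟨hC.isPolyomino (by omega), hC.columnConvex, ⟨fun c hc => ?_, ?_, ?_⟩, ?_⟩
  · refine ⟨(hC.fst_mem_Icc hc).1, ?_⟩
    rcases Finset.mem_union.mp hc with hc | hc
    · have := (hN.1 _ (mem_shiftY.mp hc)).2
      dsimp only at this
      omega
    · have := mem_strip.mp hc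
      omega
  · obtain ⟨c, hc, hc0⟩ := hN.2.1
    exact ⟨(c.1, c.2 + s), hshift hc, hc0⟩
  · by_cases hb0 : 0 ≤ b
    · obtain ⟨c, hc, hc0⟩ := hN.2.2
      exact ⟨(c.1, c.2 + s), hshift hc, by dsimp only; omega⟩
    · refine ⟨(maxX P + 1, b + s), Finset.mem_union_right _ ?_, by omega⟩
      exact mem_strip.mpr ⟨rfl, le_rfl, by omega⟩
  · have hdisj : Disjoint (shiftY s P) (strip (maxX P + 1) (b + s) k) := by
      refine Finset.disjoint_left.mpr fun c hc hc' => ?_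
      have := le_maxX (mem_shiftY.mp hc)
      have := (mem_strip.mp hc').1
      dsimp only at *
      omega
    rw [appendCol, Finset.card_union_of_disjoint hdisj, card_shiftY, card_strip, h.2.2.2]

lemma maxX_appendCol (h : IsNormalCC n P) (hk : 1 ≤ k)
    (hb : b ∈ admissibleBottoms P k) :
    maxX (appendCol k P b) = maxX P + 1 :=
  (columnChain_appendCol h.columnChain h.maxX_nonneg hk hb).maxX_eq (by linarith [h.maxX_nonneg])

lemma lastCol_appendCol (h : IsNormalCC n P) (hk : 1 ≤ k)
    (hb : b ∈ admissibleBottoms P k) :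
    lastCol (appendCol k P b) = Finset.Icc (b + max 0 (-b)) (b + max 0 (-b) + k - 1) := by
  rw [lastCol, columnYs_appendCol, maxX_appendCol h hk hb, if_pos rfl]

lemma dropLastCol_appendCol (h : IsNormalCC n P) (hk : 1 ≤ k)
    (hb : b ∈ admissibleBottoms P k) :
    dropLastCol (appendCol k P b) = shiftY (max 0 (-b)) P := by
  refine ext_columnYs fun x => ?_
  rw [columnYs_dropLastCol, columnYs_appendCol, maxX_appendCol h hk hb]
  split_ifs with hx
  · rw [columnYs_shiftY, h.columnChain.2.1 x (by omega), Finset.map_empty]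
  · rfl

lemma splitLastCol_appendCol (h : IsNormalCC n P) (hk : 1 ≤ k)
    (hb : b ∈ admissibleBottoms P k) :
    splitLastCol (appendCol k P b) = (k, P, b) := by
  have hminY : minY (shiftY (max 0 (-b)) P) = max 0 (-b) := by
    rw [minY_shiftY h.1.1, minY_eq_zero h.2.2.1, zero_add]
  rw [splitLastCol, dropLastCol_appendCol h hk hb, hminY, shiftY_shiftY, neg_add_cancel,
    shiftY_zero, lastCol_appendCol h hk hb, colMin_Icc (by omega), Int.card_Icc]
  ext <;> simp only <;> omega

lemma ColumnChain.dropLastCol {m : ℤ} (h : ColumnChain P m) (hm : 1 ≤ m) :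
    ColumnChain (dropLastCol P) (m - 1) := by
  have hM : maxX P = m := h.maxX_eq (by omega)
  refine ⟨fun x h0 hx => ?_, fun x hx => ?_, fun x h0 hx => ?_⟩
  · rw [columnYs_dropLastCol, hM, if_neg (by omega)]
    exact h.1 x h0 (by omega)
  · rw [columnYs_dropLastCol, hM]
    split_ifs
    · rfl
    · exact h.2.1 x (by omega)
  · rw [columnYs_dropLastCol, columnYs_dropLastCol, hM, if_neg (by omega), if_neg (by omega)]
    exact h.2.2 x h0 (by omega)

namespace IsNormalCC

variable {n : ℕ}

lemma columnChain_splitLastCol (h : IsNormalCC n P) (hM : 1 ≤ maxX P) :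
    ColumnChain (splitLastCol P).2.1 (maxX P - 1) :=
  (h.columnChain.dropLastCol hM).shiftY _

lemma splitLastCol_snd (h : IsNormalCC n P) (hM : 1 ≤ maxX P) :
    IsNormalCC (n - (lastCol P).card) (splitLastCol P).2.1 := by
  have hQ := h.columnChain.dropLastCol hM
  have hC := h.columnChain_splitLastCol hM
  obtain ⟨y, hy⟩ := hQ.columnYs_nonempty le_rfl (by omega)
  refine ⟨hC.isPolyomino (by omega), hC.columnConvex,
    normalized_shiftY_neg_minY (fun c hc => (hQ.fst_mem_Icc hc).1) (mem_columnYs.mp hy) rfl, ?_⟩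
  rw [splitLastCol, card_shiftY, ← h.2.2.2, ← card_dropLastCol_add P, Nat.add_sub_cancel]

lemma card_lastCol_lt (h : IsNormalCC n P) (hM : 1 ≤ maxX P) : (lastCol P).card < n := by
  obtain ⟨y, hy⟩ := (h.columnChain.dropLastCol hM).columnYs_nonempty le_rfl (by omega)
  have := Finset.card_pos.mpr ⟨_, mem_columnYs.mp hy⟩
  have := card_dropLastCol_add P
  have := h.2.2.2
  omega

lemma lastCol_splitLastCol (h : IsNormalCC n P) (hM : 1 ≤ maxX P) :
    lastCol (splitLastCol P).2.1 =
      (columnYs P (maxX P - 1)).map (addRightEmbedding (-minY (dropLastCol P))) := by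
  rw [lastCol, (h.columnChain_splitLastCol hM).maxX_eq (by omega), splitLastCol, columnYs_shiftY,
    columnYs_dropLastCol, if_neg (by omega)]

lemma splitLastCol_mem_admissibleBottoms (h : IsNormalCC n P) (hM : 1 ≤ maxX P) :
    (splitLastCol P).2.2 ∈ admissibleBottoms (splitLastCol P).2.1 (splitLastCol P).1 := by
  obtain ⟨β₀, τ₀, h₀, he₀⟩ := h.columnChain.1 (maxX P) (by omega) le_rfl
  obtain ⟨β₁, τ₁, h₁, he₁⟩ := h.columnChain.1 (maxX P - 1) (by omega) (by omega)
  have hlink := h.columnChain.2.2 (maxX P - 1) (by omega) (by omega)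
  rw [he₁, sub_add_cancel, he₀, linked_Icc_iff h₁ h₀] at hlink
  rw [admissibleBottoms, lastCol_splitLastCol h hM, he₁, Finset.map_add_right_Icc,
    colMin_Icc (by omega), colMax_Icc (by omega), splitLastCol, lastCol, he₀, colMin_Icc h₀,
    Int.card_Icc, Finset.mem_Icc]
  dsimp only
  omega

/-- Either the last column or the rest of `P` touches the bottom line, so re-adding the last
column to the normalized rest shifts it back up by exactly the amount it was shifted down. -/
lemma max_zero_neg_splitLastCol (h : IsNormalCC n P) (hM : 1 ≤ maxX P) :
    max 0 (-(splitLastCol P).2.2) = minY (dropLastCol P) := by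
  obtain ⟨β₀, τ₀, h₀, he₀⟩ := h.columnChain.1 (maxX P) (by omega) le_rfl
  obtain ⟨y, hy⟩ := (h.columnChain.dropLastCol hM).columnYs_nonempty le_rfl (by omega)
  obtain ⟨q, hq, hqm⟩ := exists_snd_eq_minY ⟨_, mem_columnYs.mp hy⟩
  have ht : 0 ≤ minY (dropLastCol P) := hqm ▸ (h.2.2.1.1 q (Finset.mem_filter.mp hq).1).2
  have hβ₀ : 0 ≤ β₀ :=
    (h.2.2.1.1 _ (mem_columnYs.mp (he₀ ▸ Finset.left_mem_Icc.mpr h₀))).2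
  obtain ⟨c, hc, hc0⟩ := h.2.2.1.2.2
  have hbot : minY (dropLastCol P) = 0 ∨ β₀ = 0 := by
    by_cases hcM : c.1 = maxX P
    · have : c.2 ∈ columnYs P (maxX P) := mem_columnYs.mpr (hcM ▸ hc)
      rw [he₀, Finset.mem_Icc] at this
      omega
    · have := minY_le (P := dropLastCol P) (Finset.mem_filter.mpr ⟨hc, hcM⟩)
      omega
  rw [splitLastCol, lastCol, he₀, colMin_Icc h₀]
  dsimp only
  omega

lemma appendCol_splitLastCol (h : IsNormalCC n P) (hM : 1 ≤ maxX P) :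
    appendCol (splitLastCol P).1 (splitLastCol P).2.1 (splitLastCol P).2.2 = P := by
  obtain ⟨β₀, τ₀, h₀, he₀⟩ := h.columnChain.1 (maxX P) (by omega) le_rfl
  have hstrip : strip (maxX P) β₀ (lastCol P).card = P.filter (·.1 = maxX P) := by
    refine strip_eq_filter ?_
    rw [he₀, lastCol, he₀, Int.card_Icc]
    congr 1
    omega
  have hb : (splitLastCol P).2.2 + minY (dropLastCol P) = β₀ := by
    rw [splitLastCol, lastCol, he₀, colMin_Icc h₀, sub_add_cancel]
  rw [appendCol, max_zero_neg_splitLastCol h hM, (h.columnChain_splitLastCol hM).maxX_eq (by omega),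
    sub_add_cancel, hb]
  change shiftY _ (shiftY _ _) ∪ strip (maxX P) β₀ (lastCol P).card = P
  rw [shiftY_shiftY, add_neg_cancel, shiftY_zero, hstrip, dropLastCol, Finset.union_comm]
  exact Finset.filter_union_filter_not_eq _ P

end IsNormalCC

/-! ### Counting -/

lemma isNormalCC_strip {n : ℕ} (hn : 1 ≤ n) : IsNormalCC n (strip 0 0 n) := by
  have hC : ColumnChain (strip 0 0 n) 0 := by
    refine ⟨fun x h0 hx => ?_, fun x hx => ?_, fun x h0 hx => by omega⟩
    · rw [columnYs_strip, if_pos (by omega)]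
      exact ⟨_, _, by omega, rfl⟩
    · rw [columnYs_strip, if_neg (by omega)]
  have h00 : ((0 : ℤ), (0 : ℤ)) ∈ strip 0 0 n := mem_strip.mpr ⟨rfl, le_rfl, by omega⟩
  refine ⟨hC.isPolyomino le_rfl, hC.columnConvex,
    ⟨fun c hc => ?_, ⟨_, h00, rfl⟩, ⟨_, h00, rfl⟩⟩, card_strip 0 0 n⟩
  have := mem_strip.mp hc
  omega

lemma IsNormalCC.eq_strip_of_maxX_eq_zero {n : ℕ} (h : IsNormalCC n P)
    (hM : maxX P = 0) : P = strip 0 0 n := by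
  have hC := h.columnChain
  rw [hM] at hC
  obtain ⟨a, b, hab, he⟩ := hC.1 0 le_rfl le_rfl
  have hfst : ∀ c ∈ P, c.1 = 0 := fun c hc => by have := hC.fst_mem_Icc hc; omega
  have ha : a = 0 := by
    obtain ⟨c, hc, hc0⟩ := h.2.2.1.2.2
    have hc' : c.2 ∈ columnYs P 0 := mem_columnYs.mpr (hfst c hc ▸ hc)
    have ha' : a ∈ columnYs P 0 := he ▸ Finset.left_mem_Icc.mpr hab
    rw [he, Finset.mem_Icc] at hc'
    have := (h.2.2.1.1 _ (mem_columnYs.mp ha')).2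
    omega
  have hb : b = n - 1 := by
    have hcard := card_filter_fst_eq P 0
    rw [Finset.filter_true_of_mem hfst, h.2.2.2, he, Int.card_Icc] at hcard
    omega
  refine ext_columnYs fun x => ?_
  rw [columnYs_strip]
  split_ifs with hx
  · rw [hx, he, ha, hb]; simp
  · exact hC.2.1 x (by omega)

lemma IsNormalCC.subset_box {n : ℕ} (h : IsNormalCC n P) :
    P ⊆ Finset.Icc 0 (n : ℤ) ×ˢ Finset.Icc 0 (n : ℤ) := by
  intro c hc
  obtain ⟨a, ha, ha0⟩ := h.2.2.1.2.1
  obtain ⟨b, hb, hb0⟩ := h.2.2.1.2.2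
  have h1 := h.1.apply_lt_card (fun _ _ h => h.fst_le) ha ha0 hc
  have h2 := h.1.apply_lt_card (fun _ _ h => h.snd_le) hb hb0 hc
  have h0 := h.2.2.1.1 c hc
  rw [h.2.2.2] at h1 h2
  simp only [Finset.mem_product, Finset.mem_Icc]
  omega

open Classical in
def normalCCs (n : ℕ) : Finset (Finset Cell) :=
  (Finset.Icc 0 (n : ℤ) ×ˢ Finset.Icc 0 (n : ℤ)).powerset.filter (IsNormalCC n)

lemma mem_normalCCs {n : ℕ} : P ∈ normalCCs n ↔ IsNormalCC n P := by
  classical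
  rw [normalCCs, Finset.mem_filter, Finset.mem_powerset]
  exact ⟨And.right, fun h => ⟨h.subset_box, h⟩⟩

lemma ccCount_eq_card (n : ℕ) : ccCount n = (normalCCs n).card := by
  rw [ccCount, ← Nat.card_eq_finsetCard]
  exact Nat.card_congr (Equiv.subtypeEquivRight fun P => mem_normalCCs.symm)

lemma normalCCs_zero : normalCCs 0 = ∅ :=
  Finset.eq_empty_of_forall_notMem fun P hP => by
    have h := mem_normalCCs.mp hP
    exact Finset.card_ne_zero_of_mem h.1.1.choose_spec h.2.2.2

/-- Polyominoes counted with a marked cell in their last column. -/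
def markedCount (n : ℕ) : ℕ := ∑ P ∈ normalCCs n, (lastCol P).card

/-- Splitting off the last column, of height `k`, is a bijection onto the triples `(k, P', b)`
with `P'` of area `n - k` and `b` admissible. -/
lemma sum_normalCCs_filter_maxX_ne_zero (g : ℕ → ℕ) (n : ℕ) :
    ∑ P ∈ (normalCCs n).filter (maxX · ≠ 0), g (lastCol P).card =
      ∑ k ∈ Finset.Icc 1 (n - 1),
        g k * (markedCount (n - k) + k * (normalCCs (n - k)).card) := by
  have hsplit : ∑ P ∈ (normalCCs n).filter (maxX · ≠ 0), g (lastCol P).card =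
      ∑ t ∈ (Finset.Icc 1 (n - 1)).sigma fun k =>
        (normalCCs (n - k)).sigma fun P' => admissibleBottoms P' k, g t.1 := by
    refine Finset.sum_nbij' (fun P => ⟨(splitLastCol P).1, (splitLastCol P).2.1,
        (splitLastCol P).2.2⟩) (fun t => appendCol t.1 t.2.1 t.2.2) ?_ ?_ ?_ ?_ fun _ _ => rfl
    · intro P hP
      obtain ⟨hP, hM⟩ := Finset.mem_filter.mp hP
      have h := mem_normalCCs.mp hP
      have hM1 : 1 ≤ maxX P := by have := h.maxX_nonneg; omega
      simp only [Finset.mem_sigma, Finset.mem_Icc, mem_normalCCs]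
      exact ⟨⟨h.one_le_card_lastCol, Nat.le_sub_one_of_lt (h.card_lastCol_lt hM1)⟩,
        h.splitLastCol_snd hM1, h.splitLastCol_mem_admissibleBottoms hM1⟩
    · rintro ⟨k, P', b⟩ ht
      simp only [Finset.mem_sigma, Finset.mem_Icc, mem_normalCCs] at ht
      obtain ⟨hk, h, hb⟩ := ht
      have hC := isNormalCC_appendCol h hk.1 hb
      rw [Nat.sub_add_cancel (by omega)] at hC
      refine Finset.mem_filter.mpr ⟨mem_normalCCs.mpr hC, ?_⟩
      rw [maxX_appendCol h hk.1 hb]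
      have := h.maxX_nonneg
      omega
    · intro P hP
      obtain ⟨hP, hM⟩ := Finset.mem_filter.mp hP
      have h := mem_normalCCs.mp hP
      exact h.appendCol_splitLastCol (by have := h.maxX_nonneg; omega)
    · rintro ⟨k, P', b⟩ ht
      simp only [Finset.mem_sigma, Finset.mem_Icc, mem_normalCCs] at ht
      obtain ⟨hk, h, hb⟩ := ht
      dsimp only
      rw [splitLastCol_appendCol h hk.1 hb]
  rw [hsplit, Finset.sum_sigma]
  refine Finset.sum_congr rfl fun k _ => ?_
  rw [Finset.sum_sigma]
  simp only [Finset.sum_const, smul_eq_mul]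
  rw [Finset.sum_congr rfl fun P' hP' => by
    rw [card_admissibleBottoms (mem_normalCCs.mp hP').isNonemptyIcc_lastCol],
    ← Finset.sum_mul, Finset.sum_add_distrib, Finset.sum_const, smul_eq_mul, markedCount]
  ring

lemma sum_normalCCs_lastCol_eq (g : ℕ → ℕ) {n : ℕ} (hn : 1 ≤ n) :
    ∑ P ∈ normalCCs n, g (lastCol P).card = g n + ∑ k ∈ Finset.Icc 1 (n - 1),
      g k * (markedCount (n - k) + k * (normalCCs (n - k)).card) := by
  have hsingle : (normalCCs n).filter (maxX · = 0) = {strip 0 0 n} := by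
    ext P
    rw [Finset.mem_filter, mem_normalCCs, Finset.mem_singleton]
    refine ⟨fun h => h.1.eq_strip_of_maxX_eq_zero h.2, ?_⟩
    rintro rfl
    exact ⟨isNormalCC_strip hn, maxX_strip hn⟩
  rw [← Finset.sum_filter_add_sum_filter_not (normalCCs n) (maxX · = 0), hsingle,
    Finset.sum_singleton, lastCol, maxX_strip hn, columnYs_strip, if_pos rfl, Int.card_Icc,
    sum_normalCCs_filter_maxX_ne_zero]
  congr 2
  omega

/-! ### Generating functions -/

open PowerSeries

def seriesOf (f : ℕ → ℕ) : PowerSeries ℚ := PowerSeries.mk fun n => (f n : ℚ)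

lemma coeff_seriesOf_mul_seriesOf {f h : ℕ → ℕ} (hf : f 0 = 0) (hh : h 0 = 0) (n : ℕ) :
    coeff n (seriesOf f * seriesOf h) =
      ∑ i ∈ Finset.Icc 1 (n - 1), (f i * h (n - i) : ℚ) := by
  rw [coeff_mul, Finset.Nat.sum_antidiagonal_eq_sum_range_succ_mk]
  simp only [seriesOf, coeff_mk]
  refine (Finset.sum_subset (fun i hi => ?_) fun i hi hi' => ?_).symm
  · rw [Finset.mem_Icc] at hi
    rw [Finset.mem_range]
    omega
  · rw [Finset.mem_range] at hi
    rw [Finset.mem_Icc] at hi'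
    rcases Nat.eq_zero_or_pos i with rfl | hi0
    · simp [hf]
    · simp [show n - i = 0 by omega, hh]

lemma seriesOf_sum_normalCCs (g : ℕ → ℕ) (hg : g 0 = 0) :
    seriesOf (fun n => ∑ P ∈ normalCCs n, g (lastCol P).card) =
      seriesOf g + seriesOf g * seriesOf markedCount +
        seriesOf (fun n => n * g n) * seriesOf fun n => (normalCCs n).card := by
  ext n
  rw [map_add, map_add, coeff_seriesOf_mul_seriesOf hg (by simp [markedCount, normalCCs_zero]),
    coeff_seriesOf_mul_seriesOf (by simp) (by simp [normalCCs_zero])]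
  simp only [seriesOf, coeff_mk]
  rcases Nat.eq_zero_or_pos n with rfl | hn
  · simp [normalCCs_zero, hg]
  · rw [sum_normalCCs_lastCol_eq g hn, add_assoc, ← Finset.sum_add_distrib]
    push_cast
    exact congrArg _ (Finset.sum_congr rfl fun k _ => by ring)

lemma seriesOf_card_normalCCs :
    seriesOf (fun n => (normalCCs n).card) =
      seriesOf (min · 1) + seriesOf (min · 1) * seriesOf markedCount +
        seriesOf id * seriesOf fun n => (normalCCs n).card := by
  have hcard : ∀ n, ∑ P ∈ normalCCs n, min (lastCol P).card 1 = (normalCCs n).card := by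
    intro n
    rw [Finset.card_eq_sum_ones]
    exact Finset.sum_congr rfl fun P hP =>
      min_eq_right (mem_normalCCs.mp hP).one_le_card_lastCol
  have hid : (fun n => n * min n 1) = id := funext fun n => by
    rcases Nat.eq_zero_or_pos n with rfl | hn
    · rfl
    · rw [min_eq_right hn, mul_one, id]
  simpa only [hcard, hid] using seriesOf_sum_normalCCs (min · 1) rfl

lemma seriesOf_markedCount :
    seriesOf markedCount = seriesOf id + seriesOf id * seriesOf markedCount +
      seriesOf (fun n => n * n) * seriesOf fun n => (normalCCs n).card :=
  seriesOf_sum_normalCCs id rfl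

/-- At `n = 0` the truncated `n - 1` is `0`, and both sides vanish since `f 0 = 0`. -/
lemma one_sub_X_mul_seriesOf {f : ℕ → ℕ} (hf : f 0 = 0) :
    (1 - X) * seriesOf f = PowerSeries.mk fun n => (f n - f (n - 1) : ℚ) := by
  ext n
  rw [sub_mul, one_mul, map_sub, coeff_mk, seriesOf, coeff_mk]
  cases n with
  | zero => simp [hf]
  | succ m => rw [coeff_succ_X_mul, coeff_mk, Nat.add_sub_cancel]

lemma one_sub_X_mul_seriesOf_min_one : (1 - X) * seriesOf (min · 1) = X := by
  rw [one_sub_X_mul_seriesOf rfl]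
  ext n
  rw [coeff_mk, coeff_X]
  rcases n with _ | _ | n <;> simp

lemma one_sub_X_mul_seriesOf_id : (1 - X) * seriesOf id = seriesOf (min · 1) := by
  rw [one_sub_X_mul_seriesOf rfl]
  ext n
  rw [coeff_mk, seriesOf, coeff_mk]
  rcases n with _ | n <;> simp

lemma one_sub_X_mul_seriesOf_mul_self :
    (1 - X) * seriesOf (fun n => n * n) = 2 * seriesOf id - seriesOf (min · 1) := by
  rw [one_sub_X_mul_seriesOf rfl]
  ext n
  simp only [two_mul, map_sub, map_add, seriesOf, coeff_mk]
  rcases n with _ | n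
  · simp
  · rw [Nat.add_sub_cancel, id, show min (n + 1) 1 = 1 by omega]
    push_cast
    ring

end HexPolyomino

/-- The area generating function of column-convex hexagonal-celled polyominoes is
`q(1−q)³ / (1 − 6q + 10q² − 7q³ + q⁴)`. -/
theorem stmt_0 :
    ((1 : PowerSeries ℚ) - 6 * PowerSeries.X + 10 * PowerSeries.X ^ 2
        - 7 * PowerSeries.X ^ 3 + PowerSeries.X ^ 4)
      * PowerSeries.mk (fun n => (ccCount n : ℚ))
    = PowerSeries.X - 3 * PowerSeries.X ^ 2 + 3 * PowerSeries.X ^ 3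
        - PowerSeries.X ^ 4 := by
  open HexPolyomino in
  · have hcc : PowerSeries.mk (fun n => (ccCount n : ℚ)) =
        seriesOf fun n => (normalCCs n).card := by
      simp only [ccCount_eq_card]
      rfl
    rw [hcc]
    have hA := seriesOf_card_normalCCs
    have hW := seriesOf_markedCount
    have h₀ := one_sub_X_mul_seriesOf_min_one
    have h₁ := one_sub_X_mul_seriesOf_id
    have h₂ := one_sub_X_mul_seriesOf_mul_self
    set A := seriesOf fun n => (normalCCs n).card
    set W := seriesOf markedCount
    set X : PowerSeries ℚ := PowerSeries.X
    have hA' : (1 - X) ^ 2 * A = (1 - X) * X * (1 + W) + X * A := by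
      linear_combination (1 - X) ^ 2 * hA + ((1 - X) * (1 + W) + A) * h₀ + (1 - X) * A * h₁
    have hW' : (1 - X) ^ 3 * W = (1 - X) * X * (1 + W) + X * (1 + X) * A := by
      linear_combination (1 - X) ^ 3 * hW + ((1 - X) ^ 2 * (1 + W) + 2 * (1 - X) * A) * h₁ +
        ((1 - X) * (1 + W) + (1 + X) * A) * h₀ + (1 - X) ^ 2 * A * h₂
    linear_combination ((1 - X) ^ 2 - X) * hA' + X * hW'
end
end

section
/- Let a_n denote the number of column-convex hexagonal-celled polyominoes with area n (counted up to translation). Then a_1 = 1, a_2 = 3, a_3 = 11, a_4 = 42, and for every n ≥ 5 one has a_n = 6·a_{n−1} − 10·a_{n−2} + 7·a_{n−3} − a_{n−4}. -/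
/-!
A column-convex polyomino is a row of vertical segments in consecutive columns, each touching
the previous one. Up to translation it is encoded by the height of its first column and, for
each later column, its height `h` and the offset `d` of its bottom from the bottom of the
previous column, the only constraint being `-h < d ≤ h'`, where `h'` is the height of the previous
column. Removing the last column then shows that the number `A n` of polyominoes of area `n` and
the total height `B n` of their last columns satisfy
`A (n + 1) = 1 + ∑_{h < n} (B (n - h) + (h + 1) A (n - h))` and
`B (n + 1) = n + 1 + ∑_{h < n} (h + 1) (B (n - h) + (h + 1) A (n - h))`.
Taking finite differences turns these convolutions into a linear recurrence for `A` with
characteristic polynomial `x⁴ - 6x³ + 10x² - 7x + 1`.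
-/

open Finset Filter

noncomputable section

lemma mem_columnYs {P : Finset Cell} {x y : ℤ} : y ∈ columnYs P x ↔ (x, y) ∈ P := by
  simp [columnYs, and_comm]

lemma columnYs_union (P Q : Finset Cell) (x : ℤ) :
    columnYs (P ∪ Q) x = columnYs P x ∪ columnYs Q x := by
  ext y; simp [mem_columnYs]

lemma ext_columnYs {P Q : Finset Cell} (h : ∀ x, columnYs P x = columnYs Q x) : P = Q := by
  ext ⟨x, y⟩; rw [← mem_columnYs, ← mem_columnYs, h]

def shiftY (a : ℤ) (P : Finset Cell) : Finset Cell := P.image fun c => (c.1, c.2 + a)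

lemma mem_shiftY {a : ℤ} {P : Finset Cell} {c : Cell} :
    c ∈ shiftY a P ↔ (c.1, c.2 - a) ∈ P := by
  simp only [shiftY, Finset.mem_image]
  exact ⟨by rintro ⟨u, hu, rfl⟩; simpa using hu, fun h => ⟨_, h, by simp⟩⟩

lemma columnYs_shiftY (a : ℤ) (P : Finset Cell) (x : ℤ) :
    columnYs (shiftY a P) x = (columnYs P x).image (· + a) := by
  ext y
  simp only [mem_columnYs, mem_shiftY, Finset.mem_image]
  exact ⟨fun h => ⟨y - a, h, by ring⟩, by rintro ⟨z, hz, rfl⟩; simpa using hz⟩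

lemma shiftY_injective (a : ℤ) : Function.Injective (shiftY a) :=
  fun P Q h => ext_columnYs fun x => Finset.image_injective (add_left_injective a)
    (by rw [← columnYs_shiftY, ← columnYs_shiftY, h])

lemma card_shiftY (a : ℤ) (P : Finset Cell) : (shiftY a P).card = P.card :=
  Finset.card_image_of_injective _ fun u v h => by
    simp only [Prod.mk.injEq, add_left_inj] at h; exact Prod.ext h.1 h.2

def minY (P : Finset Cell) : ℤ :=
  if h : P.Nonempty then (P.image Prod.snd).min' (h.image _) else 0

lemma minY_le {P : Finset Cell} {c : Cell} (hc : c ∈ P) : minY P ≤ c.2 := by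
  rw [minY, dif_pos ⟨c, hc⟩]
  exact Finset.min'_le _ _ (Finset.mem_image_of_mem _ hc)

lemma exists_snd_eq_minY {P : Finset Cell} (hP : P.Nonempty) : ∃ c ∈ P, c.2 = minY P := by
  rw [minY, dif_pos hP]
  exact Finset.mem_image.1 (Finset.min'_mem _ _)

lemma normalized_shiftY_neg_minY {P : Finset Cell} (hfst : ∀ c ∈ P, 0 ≤ c.1)
    (hfst0 : ∃ c ∈ P, c.1 = 0) : Normalized (shiftY (-minY P) P) := by
  obtain ⟨c₀, hc₀, hc₀x⟩ := hfst0
  obtain ⟨c, hc, hcy⟩ := exists_snd_eq_minY ⟨c₀, hc₀⟩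
  refine ⟨fun u hu => ?_, ⟨_, Finset.mem_image_of_mem _ hc₀, hc₀x⟩,
    ⟨_, Finset.mem_image_of_mem _ hc, by simp [hcy]⟩⟩
  have hu := mem_shiftY.1 hu
  have hux := hfst _ hu
  have hmin := minY_le hu
  exact ⟨hux, by simp only at hmin; omega⟩

lemma eq_neg_minY_of_normalized_shiftY {a : ℤ} {P : Finset Cell}
    (h : Normalized (shiftY a P)) : a = -minY P := by
  obtain ⟨hnonneg, -, u, hu, hu0⟩ := h
  obtain ⟨c, hc, hcy⟩ := exists_snd_eq_minY ⟨_, mem_shiftY.1 hu⟩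
  have hlow := (hnonneg _ (Finset.mem_image_of_mem _ hc)).2
  have hup := minY_le (mem_shiftY.1 hu)
  simp only at hlow hup
  omega

lemma numComponents_Ico {a b : ℤ} (hab : a < b) : numComponents (Ico a b) = 1 := by
  rw [numComponents, Finset.card_eq_one]
  refine ⟨a, Finset.ext fun y => ?_⟩
  simp only [Finset.mem_filter, Finset.mem_Ico, Finset.mem_singleton]
  omega

lemma eq_Ico_of_numComponents_eq_one {s : Finset ℤ} (hs : s.Nonempty)
    (h : numComponents s = 1) : ∃ l : ℤ, ∃ k : ℕ, 0 < k ∧ s = Ico l (l + k) := by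
  suffices hIcc : ∀ c, s.min' hs ≤ c → c ≤ s.max' hs → c ∈ s by
    refine ⟨s.min' hs, (s.max' hs - s.min' hs + 1).toNat,
      by have := s.min'_le _ (s.max'_mem hs); omega, Finset.ext fun y => ?_⟩
    rw [Finset.mem_Ico]
    exact ⟨fun hy => by have := s.min'_le _ hy; have := s.le_max' _ hy; omega,
      fun hy => hIcc y hy.1 (by omega)⟩
  intro c hmin hmax
  by_contra hc
  -- both `s.min' hs` and the least element of `s` above the gap `c` start a component
  have habove : (s.filter (c < ·)).Nonempty :=
    ⟨_, Finset.mem_filter.2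
      ⟨s.max'_mem hs, lt_of_le_of_ne hmax fun e => hc (e ▸ s.max'_mem hs)⟩⟩
  set z := (s.filter (c < ·)).min' habove
  obtain ⟨hz, hcz⟩ := Finset.mem_filter.1 ((s.filter (c < ·)).min'_mem habove)
  have hz1 : z - 1 ∉ s := fun hz1 => by
    rcases eq_or_lt_of_le (show c ≤ z - 1 by omega) with e | hlt
    · exact hc (e ▸ hz1)
    · have := (s.filter (c < ·)).min'_le _ (Finset.mem_filter.2 ⟨hz1, hlt⟩); omega
  have hm1 : s.min' hs - 1 ∉ s := fun hm1 => by have := s.min'_le _ hm1; omega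
  have : 1 < numComponents s := Finset.one_lt_card.2
    ⟨_, Finset.mem_filter.2 ⟨s.min'_mem hs, hm1⟩, z, Finset.mem_filter.2 ⟨hz, hz1⟩,
      by omega⟩
  omega

lemma hexAdj_iff {a b : Cell} : HexAdj a b ↔
    (b.1 = a.1 ∧ (b.2 = a.2 + 1 ∨ b.2 = a.2 - 1)) ∨
    (b.1 = a.1 + 1 ∧ (b.2 = a.2 ∨ b.2 = a.2 + 1)) ∨
    (b.1 = a.1 - 1 ∧ (b.2 = a.2 ∨ b.2 = a.2 - 1)) := by
  simp only [HexAdj, Set.mem_insert_iff, Set.mem_singleton_iff, Prod.ext_iff]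
  omega

open Relation

def Linked (P : Finset Cell) (u v : Cell) : Prop := u ∈ P ∧ v ∈ P ∧ HexAdj u v

instance (P : Finset Cell) : Std.Symm (Linked P) where
  symm _ _ h := ⟨h.2.1, h.1, by have := h.2.2; rw [hexAdj_iff] at this ⊢; omega⟩

lemma exists_crossing {P : Finset Cell} {a b : Cell} (h : ReflTransGen (Linked P) a b)
    {x : ℤ} (hax : a.1 ≤ x) (hxb : x < b.1) :
    ∃ y, (x, y) ∈ P ∧ ((x + 1, y) ∈ P ∨ (x + 1, y + 1) ∈ P) := by
  induction h with
  | refl => omega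
  | @tail c d _ hcd ih =>
    by_cases hxc : x < c.1
    · exact ih hxc
    · obtain ⟨hc, hd, hadj⟩ := hcd
      rw [hexAdj_iff] at hadj
      obtain ⟨c1, c2⟩ := c
      obtain ⟨d1, d2⟩ := d
      obtain rfl : c1 = x := by omega
      refine ⟨c2, hc, ?_⟩
      obtain ⟨rfl, rfl | rfl⟩ : d1 = c1 + 1 ∧ (d2 = c2 ∨ d2 = c2 + 1) := by omega
      exacts [Or.inl hd, Or.inr hd]

lemma reflTransGen_linked_of_column_eq_Ico {P : Finset Cell} {x l : ℤ} {h : ℕ}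
    (hcol : columnYs P x = Ico l (l + h)) {y y' : ℤ} (hy : y ∈ columnYs P x)
    (hy' : y' ∈ columnYs P x) : ReflTransGen (Linked P) (x, y) (x, y') := by
  wlog hle : y ≤ y' generalizing y y'
  · exact symm (this hy' hy (by omega))
  induction y', hle using Int.leInduction with
  | base => rfl
  | succ z hyz ih =>
    rw [hcol, Finset.mem_Ico] at hy hy'
    have hz : z ∈ columnYs P x := by rw [hcol, Finset.mem_Ico]; omega
    exact (ih hz).tail ⟨mem_columnYs.1 hz, mem_columnYs.1 (by rw [hcol, Finset.mem_Ico]; omega),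
      by rw [hexAdj_iff]; simp⟩

lemma columnYs_filter_fst_lt (P : Finset Cell) (m x : ℤ) :
    columnYs (P.filter (·.1 < m)) x = if x < m then columnYs P x else ∅ := by
  ext y
  split_ifs with hx <;> simp [mem_columnYs, hx]

structure IsColumnStack (P : Finset Cell) (k : ℕ) : Prop where
  column_eq_Ico : ∀ x : ℤ, 0 ≤ x → x < k →
    ∃ l : ℤ, ∃ h : ℕ, 0 < h ∧ columnYs P x = Ico l (l + h)
  column_eq_empty : ∀ x : ℤ, x < 0 ∨ k ≤ x → columnYs P x = ∅
  touch : ∀ x : ℤ, 0 ≤ x → x + 1 < k →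
    ∃ y ∈ columnYs P x, y ∈ columnYs P (x + 1) ∨ y + 1 ∈ columnYs P (x + 1)

namespace IsColumnStack

variable {P : Finset Cell} {k : ℕ}

lemma columnYs_nonempty (hP : IsColumnStack P k) {x : ℤ} (h0 : 0 ≤ x) (hk : x < k) :
    (columnYs P x).Nonempty := by
  obtain ⟨l, h, hh, hcol⟩ := hP.column_eq_Ico x h0 hk
  exact ⟨l, by rw [hcol, Finset.mem_Ico]; omega⟩

lemma fst_mem_Ico (hP : IsColumnStack P k) {c : Cell} (hc : c ∈ P) : 0 ≤ c.1 ∧ c.1 < k := by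
  by_contra hout
  have := mem_columnYs.2 hc
  rw [hP.column_eq_empty c.1 (by omega)] at this
  exact Finset.notMem_empty _ this

lemma unique {k' : ℕ} (hP : IsColumnStack P k) (hP' : IsColumnStack P k') : k = k' := by
  by_contra hne
  wlog hlt : k < k' generalizing k k'
  · exact this hP' hP (Ne.symm hne) (by omega)
  have := hP'.columnYs_nonempty (x := k) (by positivity) (by exact_mod_cast hlt)
  rw [hP.column_eq_empty k (by omega)] at this
  exact Finset.not_nonempty_empty this

lemma columnConvex (hP : IsColumnStack P k) : ColumnConvex P := by
  intro x hne
  by_cases hx : 0 ≤ x ∧ x < k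
  · obtain ⟨l, h, hh, hcol⟩ := hP.column_eq_Ico x hx.1 hx.2
    rw [hcol]
    exact numComponents_Ico (by omega)
  · rw [hP.column_eq_empty x (by omega)] at hne
    exact absurd hne Finset.not_nonempty_empty

lemma isPolyomino (hP : IsColumnStack P k) (hk : 0 < k) : IsPolyomino P := by
  obtain ⟨y₀, hy₀⟩ := hP.columnYs_nonempty le_rfl (by exact_mod_cast hk)
  have reach : ∀ n : ℕ, (n : ℤ) < k → ∀ y ∈ columnYs P n,
      ReflTransGen (Linked P) (0, y₀) (n, y) := by
    intro n
    induction n with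
    | zero =>
      intro hn y hy
      obtain ⟨l, h, -, hcol⟩ := hP.column_eq_Ico 0 le_rfl hn
      exact reflTransGen_linked_of_column_eq_Ico hcol hy₀ hy
    | succ n ih =>
      intro hn y hy
      push_cast at hn hy ⊢
      obtain ⟨z, hz, hz'⟩ := hP.touch n (by positivity) hn
      obtain ⟨l, h, -, hcol⟩ := hP.column_eq_Ico (n + 1) (by positivity) hn
      have hstep : ∃ z' ∈ columnYs P (n + 1), Linked P (n, z) (n + 1, z') := by
        rcases hz' with hz' | hz'
        · exact ⟨z, hz', mem_columnYs.1 hz, mem_columnYs.1 hz', by rw [hexAdj_iff]; simp⟩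
        · exact ⟨z + 1, hz', mem_columnYs.1 hz, mem_columnYs.1 hz', by rw [hexAdj_iff]; simp⟩
      obtain ⟨z', hz'mem, hlink⟩ := hstep
      exact ((ih (by omega) z hz).tail hlink).trans
        (reflTransGen_linked_of_column_eq_Ico hcol hz'mem hy)
  have reach' : ∀ c ∈ P, ReflTransGen (Linked P) (0, y₀) c := by
    rintro ⟨x, y⟩ hc
    obtain ⟨h0, hk⟩ := hP.fst_mem_Ico hc
    obtain ⟨n, rfl⟩ := Int.eq_ofNat_of_zero_le h0
    exact reach n hk y (mem_columnYs.2 hc)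
  exact ⟨⟨_, mem_columnYs.1 hy₀⟩,
    fun a ha b hb => (symm (reach' a ha)).trans (reach' b hb)⟩

lemma shiftY (hP : IsColumnStack P k) (a : ℤ) : IsColumnStack (shiftY a P) k := by
  refine ⟨fun x h0 hx => ?_, fun x hx => ?_, fun x h0 hx => ?_⟩
  · obtain ⟨l, h, hh, hcol⟩ := hP.column_eq_Ico x h0 hx
    refine ⟨l + a, h, hh, ?_⟩
    rw [columnYs_shiftY, hcol, Finset.image_add_right_Ico]
    ring_nf
  · rw [columnYs_shiftY, hP.column_eq_empty x hx, Finset.image_empty]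
  · obtain ⟨y, hy, hy'⟩ := hP.touch x h0 hx
    refine ⟨y + a, ?_, ?_⟩
    · rw [columnYs_shiftY]; exact Finset.mem_image_of_mem _ hy
    · simp only [columnYs_shiftY, Finset.mem_image, add_left_inj, exists_eq_right]
      rcases hy' with hy' | hy'
      · exact Or.inl hy'
      · exact Or.inr ⟨y + 1, hy', by ring⟩

lemma filter_fst_lt (hP : IsColumnStack P (k + 1)) :
    IsColumnStack (P.filter (·.1 < k)) k := by
  refine ⟨fun x h0 hx => ?_, fun x hx => ?_, fun x h0 hx => ?_⟩
  · rw [columnYs_filter_fst_lt, if_pos hx]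
    exact hP.column_eq_Ico x h0 (by push_cast; omega)
  · rw [columnYs_filter_fst_lt]
    split_ifs with hxk
    · exact hP.column_eq_empty x (by omega)
    · rfl
  · rw [columnYs_filter_fst_lt, columnYs_filter_fst_lt, if_pos (by omega), if_pos hx]
    exact hP.touch x h0 (by push_cast; omega)

end IsColumnStack

lemma isColumnStack_of_isPolyomino {P : Finset Cell} (hP : IsPolyomino P)
    (hcc : ColumnConvex P) (hfst : ∀ c ∈ P, 0 ≤ c.1) (hfst0 : ∃ c ∈ P, c.1 = 0) :
    ∃ k, IsColumnStack P k := by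
  obtain ⟨c₀, hc₀, hc₀x⟩ := hfst0
  have hne : (P.image Prod.fst).Nonempty := ⟨_, Finset.mem_image_of_mem _ hc₀⟩
  obtain ⟨c₁, hc₁, hc₁x⟩ := Finset.mem_image.1 ((P.image Prod.fst).max'_mem hne)
  set M := (P.image Prod.fst).max' hne
  have hle : ∀ c ∈ P, c.1 ≤ M := fun c hc => Finset.le_max' _ _ (Finset.mem_image_of_mem _ hc)
  have hnonempty : ∀ x, 0 ≤ x → x ≤ M → (columnYs P x).Nonempty := by
    intro x h0 hM
    rcases eq_or_lt_of_le hM with rfl | hlt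
    · exact ⟨c₁.2, mem_columnYs.2 (by rw [← hc₁x]; exact hc₁)⟩
    · obtain ⟨y, hy, -⟩ :=
        exists_crossing (hP.2 c₀ hc₀ c₁ hc₁) (x := x) (by omega) (by omega)
      exact ⟨y, mem_columnYs.2 hy⟩
  refine ⟨(M + 1).toNat, fun x h0 hx => ?_, fun x hx => ?_, fun x h0 hx => ?_⟩
  · have hne := hnonempty x h0 (by omega)
    exact eq_Ico_of_numComponents_eq_one hne (hcc x hne)
  · ext y
    simp only [mem_columnYs, Finset.notMem_empty, iff_false]
    intro hy
    have := hfst _ hy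
    have := hle _ hy
    omega
  · obtain ⟨y, hy⟩ := hnonempty x h0 (by omega)
    obtain ⟨y', hy'⟩ := hnonempty (x + 1) (by omega) (by omega)
    obtain ⟨z, hz, hz'⟩ := exists_crossing (hP.2 _ (mem_columnYs.1 hy) _ (mem_columnYs.1 hy'))
      le_rfl (by simp)
    exact ⟨z, mem_columnYs.2 hz, hz'.imp mem_columnYs.2 mem_columnYs.2⟩

lemma Finset.Ico_eq_Ico_iff {α : Type*} [LinearOrder α] [LocallyFiniteOrder α] {a b c d : α}
    (h : a < b) : Ico a b = Ico c d ↔ a = c ∧ b = d := by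
  rw [← Finset.coe_inj, Finset.coe_Ico, Finset.coe_Ico, Set.Ico_eq_Ico_iff (Or.inl h)]

lemma image_add_right_Ico_add (l a : ℤ) (h : ℕ) :
    (Ico l (l + h)).image (· + a) = Ico (l + a) (l + a + h) := by
  rw [Finset.image_add_right_Ico]; ring_nf

lemma sum_range_succ_sub_sum_range {F : ℕ → ℕ → ℤ} {G : ℕ → ℤ} {n : ℕ}
    (hFG : ∀ j < n, F (n + 1) j - F n j = G j) :
    ∑ j ∈ range (n + 1), F (n + 1) j - ∑ j ∈ range n, F n j =
      F (n + 1) n + ∑ j ∈ range n, G j := by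
  rw [Finset.sum_range_succ, ← Finset.sum_congr rfl fun j hj => hFG j (Finset.mem_range.1 hj),
    Finset.sum_sub_distrib]
  ring

/-- Differencing the two convolution identities twice leaves two local relations between `a`
and `b`; eliminating `b` from them gives the recurrence. -/
lemma linear_recurrence_of_convolutions {a b : ℕ → ℤ}
    (ha : ∀ n, a (n + 1) = 1 + ∑ h ∈ range n, (b (n - h) + (h + 1) * a (n - h)))
    (hb : ∀ n, b (n + 1) = n + 1 + ∑ h ∈ range n, (h + 1) * (b (n - h) + (h + 1) * a (n - h)))
    (n : ℕ) : a (n + 5) = 6 * a (n + 4) - 10 * a (n + 3) + 7 * a (n + 2) - a (n + 1) := by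
  have reflect (f : ℕ → ℤ → ℤ) (n : ℕ) :
      ∑ h ∈ range n, f (n - h) ((h : ℤ) + 1) =
        ∑ j ∈ range n, f (j + 1) ((n : ℤ) - j) := by
    rw [← Finset.sum_range_reflect]
    refine Finset.sum_congr rfl fun j hj => ?_
    rw [Finset.mem_range] at hj
    congr 1 <;> omega
  have ha' (n : ℕ) : a (n + 1) = 1 + ∑ j ∈ range n, (b (j + 1) + (n - j) * a (j + 1)) := by
    rw [ha, reflect fun m c => b m + c * a m]
  have hb' (n : ℕ) :
      b (n + 1) = n + 1 + ∑ j ∈ range n, (n - j) * (b (j + 1) + (n - j) * a (j + 1)) := by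
    rw [hb, reflect fun m c => c * (b m + c * a m)]
  have dA (n : ℕ) : a (n + 2) - a (n + 1) = b (n + 1) + ∑ j ∈ range (n + 1), a (j + 1) := by
    have key := sum_range_succ_sub_sum_range (n := n)
      (F := fun n j => b (j + 1) + (n - j) * a (j + 1)) (G := fun j => a (j + 1))
      fun j _ => by push_cast; ring
    rw [ha' (n + 1), ha' n]
    push_cast at key ⊢
    linarith [Finset.sum_range_succ (fun j => a (j + 1)) n]
  have dB (n : ℕ) : b (n + 2) - b (n + 1) =
      1 + ∑ j ∈ range (n + 1), (b (j + 1) + (2 * (n + 1 - j) - 1) * a (j + 1)) := by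
    have key := sum_range_succ_sub_sum_range (n := n)
      (F := fun n j => (n - j) * (b (j + 1) + (n - j) * a (j + 1)))
      (G := fun j => b (j + 1) + (2 * (n + 1 - j) - 1) * a (j + 1))
      fun j _ => by push_cast; ring
    rw [hb' (n + 1), hb' n]
    push_cast at key ⊢
    linarith [Finset.sum_range_succ
      (fun j => b (j + 1) + (2 * ((n : ℤ) + 1 - j) - 1) * a (j + 1)) n]
  have E1 (n : ℕ) :
      a (n + 3) - 2 * a (n + 2) + a (n + 1) = b (n + 2) - b (n + 1) + a (n + 2) := by
    have := dA (n + 1)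
    rw [Finset.sum_range_succ] at this
    linarith [dA n]
  have E2 (n : ℕ) : b (n + 3) - 2 * b (n + 2) + b (n + 1) =
      b (n + 2) + a (n + 2) + 2 * (a (n + 2) - a (n + 1) - b (n + 1)) := by
    have key := sum_range_succ_sub_sum_range (n := n + 1)
      (F := fun n j => b (j + 1) + (2 * ((n : ℤ) - j) - 1) * a (j + 1))
      (G := fun j => 2 * a (j + 1))
      fun j _ => by push_cast; ring
    have h1 := dB (n + 1)
    have h0 := dB n
    rw [← Finset.mul_sum] at key
    push_cast at key h1 h0
    linarith [dA n]
  linarith [E1 n, E1 (n + 1), E1 (n + 2), E2 n, E2 (n + 1)]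

namespace ColumnEncoding

/-! In an encoding `(h₀, t)`, column `0` is `[0, h₀)` and `t` lists the later columns, last one
first, as pairs (bottom of the column minus bottom of the previous column, height). -/

def lastHeight (h₀ : ℕ) : List (ℤ × ℕ) → ℕ
  | [] => h₀
  | (_, h) :: _ => h

def lastBottom : List (ℤ × ℕ) → ℤ
  | [] => 0
  | (d, _) :: t => lastBottom t + d

/-- In the hexagonal adjacency a new column `[b + d, b + d + h)` touches the previous column
`[b, b + h')` iff `-h < d ≤ h'`. -/
def Valid (h₀ : ℕ) : List (ℤ × ℕ) → Prop
  | [] => 0 < h₀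
  | (d, h) :: t => Valid h₀ t ∧ 0 < h ∧ -(h : ℤ) < d ∧ d ≤ lastHeight h₀ t

def area (h₀ : ℕ) (t : List (ℤ × ℕ)) : ℕ := h₀ + (t.map Prod.snd).sum

def segment (x l : ℤ) (h : ℕ) : Finset Cell := {x} ×ˢ Ico l (l + h)

def cells (h₀ : ℕ) : List (ℤ × ℕ) → Finset Cell
  | [] => segment 0 0 h₀
  | (d, h) :: t => cells h₀ t ∪ segment (t.length + 1) (lastBottom t + d) h

variable {h₀ : ℕ} {t : List (ℤ × ℕ)}

lemma Valid.lastHeight_pos (hv : Valid h₀ t) : 0 < lastHeight h₀ t := by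
  cases t with
  | nil => exact hv
  | cons c t => exact hv.2.1

lemma Valid.first_pos (hv : Valid h₀ t) : 0 < h₀ := by
  induction t with
  | nil => exact hv
  | cons c t ih => exact ih hv.1

lemma card_segment (x l : ℤ) (h : ℕ) : (segment x l h).card = h := by
  simp [segment]

lemma columnYs_segment (x l : ℤ) (h : ℕ) (x' : ℤ) :
    columnYs (segment x l h) x' = if x' = x then Ico l (l + h) else ∅ := by
  ext y
  split_ifs with hx
  · simp [mem_columnYs, segment, hx]
  · simp [mem_columnYs, segment, Ne.symm hx]

lemma columnYs_cells_eq_empty {x : ℤ} (hx : x < 0 ∨ t.length < x) :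
    columnYs (cells h₀ t) x = ∅ := by
  induction t with
  | nil =>
    simp only [List.length_nil, Nat.cast_zero] at hx
    rw [cells, columnYs_segment, if_neg (by omega)]
  | cons c t ih =>
    simp only [List.length_cons, Nat.cast_add, Nat.cast_one] at hx
    rw [cells, columnYs_union, ih (by omega), columnYs_segment, if_neg (by omega),
      Finset.empty_union]

lemma columnYs_cells_cons (d : ℤ) (h : ℕ) (t : List (ℤ × ℕ)) (x : ℤ) :
    columnYs (cells h₀ ((d, h) :: t)) x =
      if x = t.length + 1 then Ico (lastBottom t + d) (lastBottom t + d + h)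
      else columnYs (cells h₀ t) x := by
  rw [cells, columnYs_union, columnYs_segment]
  split_ifs with hx
  · rw [columnYs_cells_eq_empty (by omega), Finset.empty_union]
  · rw [Finset.union_empty]

lemma columnYs_cells_length (h₀ : ℕ) (t : List (ℤ × ℕ)) :
    columnYs (cells h₀ t) t.length = Ico (lastBottom t) (lastBottom t + lastHeight h₀ t) := by
  cases t with
  | nil => simp [cells, columnYs_segment, lastBottom, lastHeight]
  | cons c t =>
    rw [columnYs_cells_cons, if_pos (by simp)]
    rfl

lemma columnYs_cells_zero (h₀ : ℕ) (t : List (ℤ × ℕ)) :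
    columnYs (cells h₀ t) 0 = Ico 0 (h₀ : ℤ) := by
  induction t with
  | nil => simp [cells, columnYs_segment]
  | cons c t ih => rw [columnYs_cells_cons, if_neg (by omega), ih]

lemma isColumnStack_cells (hv : Valid h₀ t) : IsColumnStack (cells h₀ t) (t.length + 1) := by
  induction t with
  | nil =>
    simp only [List.length_nil, zero_add]
    refine ⟨fun x h0 hx => ⟨0, h₀, hv, ?_⟩, fun x hx => ?_, fun x h0 hx => by omega⟩
    · rw [show x = 0 by omega, columnYs_cells_zero, zero_add]
    · exact columnYs_cells_eq_empty (by simp only [List.length_nil, CharP.cast_eq_zero]; omega)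
  | cons c t ih =>
    obtain ⟨d, h⟩ := c
    obtain ⟨hvt, hh, hd, hd'⟩ := hv
    have hstack := ih hvt
    simp only [List.length_cons]
    refine ⟨fun x h0 hx => ?_, fun x hx => ?_, fun x h0 hx => ?_⟩
    · rw [columnYs_cells_cons]
      split_ifs with hlast
      · exact ⟨_, h, hh, rfl⟩
      · exact hstack.column_eq_Ico x h0 (by push_cast; omega)
    · exact columnYs_cells_eq_empty (by simp only [List.length_cons]; push_cast; omega)
    · rw [columnYs_cells_cons, columnYs_cells_cons, if_neg (by omega)]
      split_ifs with hlast
      · obtain rfl : x = t.length := by omega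
        have hH := hvt.lastHeight_pos
        simp only [columnYs_cells_length, Finset.mem_Ico]
        by_cases hd1 : 1 ≤ d
        · exact ⟨lastBottom t + d - 1, by omega, by omega⟩
        · exact ⟨lastBottom t, by omega, by omega⟩
      · exact hstack.touch x h0 (by push_cast; omega)

lemma card_cells (h₀ : ℕ) (t : List (ℤ × ℕ)) : (cells h₀ t).card = area h₀ t := by
  induction t with
  | nil => rw [cells, card_segment, area, List.map_nil, List.sum_nil, add_zero]
  | cons c t ih =>
    obtain ⟨d, h⟩ := c
    have hdisj : Disjoint (cells h₀ t) (segment (t.length + 1) (lastBottom t + d) h) := by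
      rw [Finset.disjoint_left]
      rintro ⟨x, y⟩ hc hc'
      rw [segment, Finset.mem_product, Finset.mem_singleton] at hc'
      have hx : x = t.length + 1 := hc'.1
      have := mem_columnYs.2 hc
      rw [columnYs_cells_eq_empty (by omega)] at this
      exact Finset.notMem_empty _ this
    rw [cells, Finset.card_union_of_disjoint hdisj, ih, card_segment, area, area, List.map_cons,
      List.sum_cons]
    ring

lemma cells_injective {h₀' : ℕ} {t' : List (ℤ × ℕ)} (hv : Valid h₀ t)
    (hv' : Valid h₀' t') (heq : cells h₀ t = cells h₀' t') : h₀ = h₀' ∧ t = t' := by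
  have h₀_eq : h₀ = h₀' := by
    have := congrArg (columnYs · 0) heq
    simp only [columnYs_cells_zero] at this
    rw [Finset.Ico_eq_Ico_iff (by exact_mod_cast hv.first_pos)] at this
    exact_mod_cast this.2
  subst h₀_eq
  refine ⟨rfl, ?_⟩
  induction t generalizing t' with
  | nil =>
    have := (isColumnStack_cells hv).unique (heq ▸ isColumnStack_cells hv')
    exact (List.length_eq_zero_iff.1 (by simpa using this.symm)).symm
  | cons c t ih =>
    have hlen := (isColumnStack_cells hv).unique (heq ▸ isColumnStack_cells hv')
    obtain ⟨d, h⟩ := c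
    obtain _ | ⟨⟨d', h'⟩, t'⟩ := t'
    · simp at hlen
    simp only [List.length_cons, add_left_inj] at hlen
    have hcol := fun x => congrArg (columnYs · x) heq
    simp only [columnYs_cells_cons, hlen] at hcol
    obtain rfl : t = t' := ih hv.1 hv'.1 <| ext_columnYs fun x => by
      by_cases hx : x = t'.length + 1
      · rw [columnYs_cells_eq_empty (by omega), columnYs_cells_eq_empty (by omega)]
      · simpa [hx] using hcol x
    have hlast := hcol (t.length + 1)
    simp only [if_pos] at hlast
    rw [Finset.Ico_eq_Ico_iff (by have := hv.2.1; omega)] at hlast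
    simp only [List.cons.injEq, Prod.mk.injEq, and_true]
    omega

lemma exists_eq_shiftY_cells {k : ℕ} {P : Finset Cell} (hP : IsColumnStack P (k + 1)) :
    ∃ h₀ t a, Valid h₀ t ∧ t.length = k ∧ P = shiftY a (cells h₀ t) := by
  induction k generalizing P with
  | zero =>
    obtain ⟨l, h, hh, hcol⟩ := hP.column_eq_Ico 0 le_rfl (by simp)
    refine ⟨h, [], l, hh, rfl, ext_columnYs fun x => ?_⟩
    rw [columnYs_shiftY]
    by_cases hx : x = 0
    · rw [hx, hcol, columnYs_cells_zero, Finset.image_add_right_Ico, zero_add, add_comm]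
    · have hx' : x < 0 ∨ (([] : List (ℤ × ℕ)).length : ℤ) < x := by
        rw [List.length_nil, Nat.cast_zero]; omega
      rw [hP.column_eq_empty x (by omega), columnYs_cells_eq_empty hx', Finset.image_empty]
  | succ k ih =>
    obtain ⟨h₀, t, a, hv, rfl, hP'⟩ := ih hP.filter_fst_lt
    have hcol (x : ℤ) := congrArg (columnYs · x) hP'
    simp only [columnYs_filter_fst_lt, columnYs_shiftY] at hcol
    obtain ⟨l, h, hh, hlast⟩ :=
      hP.column_eq_Ico (t.length + 1) (by positivity) (by push_cast; omega)
    have hprev :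
        columnYs P t.length = Ico (lastBottom t + a) (lastBottom t + a + lastHeight h₀ t) := by
      have := hcol t.length
      rwa [if_pos (by push_cast; omega), columnYs_cells_length,
        image_add_right_Ico_add] at this
    obtain ⟨y, hy, hy'⟩ := hP.touch t.length (by positivity) (by push_cast; omega)
    rw [hprev, Finset.mem_Ico] at hy
    rw [hlast, Finset.mem_Ico, Finset.mem_Ico] at hy'
    refine ⟨h₀, (l - a - lastBottom t, h) :: t, a, ⟨hv, hh, by omega, by omega⟩,
      rfl, ext_columnYs fun x => ?_⟩
    rw [columnYs_shiftY, columnYs_cells_cons]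
    split_ifs with hx
    · rw [image_add_right_Ico_add, hx, hlast]
      ring_nf
    · by_cases hxk : x < t.length + 1
      · have := hcol x
        rwa [if_pos (by push_cast; omega)] at this
      · rw [hP.column_eq_empty x (by push_cast; omega), columnYs_cells_eq_empty (by omega),
          Finset.image_empty]

def decode (h₀ : ℕ) (t : List (ℤ × ℕ)) : Finset Cell :=
  shiftY (-minY (cells h₀ t)) (cells h₀ t)

lemma isPolyomino_decode (hv : Valid h₀ t) : IsPolyomino (decode h₀ t) :=
  ((isColumnStack_cells hv).shiftY _).isPolyomino (by omega)

lemma columnConvex_decode (hv : Valid h₀ t) : ColumnConvex (decode h₀ t) :=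
  ((isColumnStack_cells hv).shiftY _).columnConvex

lemma normalized_decode (hv : Valid h₀ t) : Normalized (decode h₀ t) := by
  refine normalized_shiftY_neg_minY (fun c hc => ((isColumnStack_cells hv).fst_mem_Ico hc).1)
    ⟨(0, 0), mem_columnYs.1 ?_, rfl⟩
  rw [columnYs_cells_zero, Finset.mem_Ico]
  exact ⟨le_rfl, by exact_mod_cast hv.first_pos⟩

lemma card_decode (h₀ : ℕ) (t : List (ℤ × ℕ)) : (decode h₀ t).card = area h₀ t := by
  rw [decode, card_shiftY, card_cells]

lemma decode_injective {h₀' : ℕ} {t' : List (ℤ × ℕ)} (hv : Valid h₀ t)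
    (hv' : Valid h₀' t') (heq : decode h₀ t = decode h₀' t') : h₀ = h₀' ∧ t = t' := by
  have hcol := congrArg (columnYs · 0) heq
  simp only [decode, columnYs_shiftY, columnYs_cells_zero, Finset.image_add_right_Ico] at hcol
  rw [Finset.Ico_eq_Ico_iff (by have := hv.first_pos; omega)] at hcol
  have hmin : minY (cells h₀ t) = minY (cells h₀' t') := by omega
  refine cells_injective hv hv' (shiftY_injective (-minY (cells h₀ t)) ?_)
  simpa only [decode, hmin] using heq

lemma exists_decode_eq {P : Finset Cell} (hP : IsPolyomino P) (hcc : ColumnConvex P)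
    (hN : Normalized P) : ∃ h₀ t, Valid h₀ t ∧ decode h₀ t = P := by
  obtain ⟨k, hk⟩ := isColumnStack_of_isPolyomino hP hcc (fun c hc => (hN.1 c hc).1) hN.2.1
  obtain ⟨c, hc⟩ := hP.1
  obtain ⟨k, rfl⟩ : ∃ k', k = k' + 1 :=
    Nat.exists_eq_add_one.2 (by have := hk.fst_mem_Ico hc; omega)
  obtain ⟨h₀, t, a, hv, -, rfl⟩ := exists_eq_shiftY_cells hk
  exact ⟨h₀, t, hv, by rw [decode, eq_neg_minY_of_normalized_shiftY hN]⟩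

/-- The offsets `j - h` with `j < lastHeight + h + 1` are exactly the valid ones for a new
column of height `h + 1`. -/
def extensions (e : ℕ × List (ℤ × ℕ)) (h : ℕ) : Finset (ℕ × List (ℤ × ℕ)) :=
  (range (lastHeight e.1 e.2 + h + 1)).image fun j : ℕ => (e.1, ((j : ℤ) - h, h + 1) :: e.2)

def encodings : ℕ → Finset (ℕ × List (ℤ × ℕ))
  | 0 => ∅
  | n + 1 => insert (n + 1, [])
      ((range n).biUnion fun h => (encodings (n - h)).biUnion (extensions · h))

def lastHeightSum (n : ℕ) : ℕ := ∑ e ∈ encodings n, lastHeight e.1 e.2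

lemma encodings_succ (n : ℕ) : encodings (n + 1) = insert (n + 1, [])
    ((range n).biUnion fun h => (encodings (n - h)).biUnion (extensions · h)) := by
  rw [encodings]

lemma mem_extensions {e e' : ℕ × List (ℤ × ℕ)} {h : ℕ} : e' ∈ extensions e h ↔
    ∃ d : ℤ, -(h + 1 : ℤ) < d ∧ d ≤ lastHeight e.1 e.2 ∧
      e' = (e.1, (d, h + 1) :: e.2) := by
  simp only [extensions, Finset.mem_image, Finset.mem_range]
  constructor
  · rintro ⟨j, hj, rfl⟩
    exact ⟨j - h, by omega, by omega, rfl⟩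
  · rintro ⟨d, hd, hd', rfl⟩
    refine ⟨(d + h).toNat, by omega, ?_⟩
    simp only [Prod.mk.injEq, List.cons.injEq, true_and, and_true]
    omega

lemma card_extensions (e : ℕ × List (ℤ × ℕ)) (h : ℕ) :
    (extensions e h).card = lastHeight e.1 e.2 + h + 1 := by
  rw [extensions, Finset.card_image_of_injective _ fun i j hij => by simpa using hij,
    Finset.card_range]

lemma Valid.area_pos (hv : Valid h₀ t) : 0 < area h₀ t := by
  have := hv.first_pos
  unfold area
  omega

lemma mem_encodings {n : ℕ} {e : ℕ × List (ℤ × ℕ)} :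
    e ∈ encodings n ↔ Valid e.1 e.2 ∧ area e.1 e.2 = n := by
  induction n using Nat.strong_induction_on generalizing e with
  | _ n ih =>
  obtain _ | n := n
  · simp only [encodings, Finset.notMem_empty, false_iff, not_and]
    exact fun hv => (hv.area_pos).ne'
  obtain ⟨h₀, t⟩ := e
  simp only [encodings_succ, Finset.mem_insert, Finset.mem_biUnion, Finset.mem_range,
    mem_extensions]
  constructor
  · rintro (he | ⟨h, hn, e₀, he₀, d, hd, hd', he⟩)
    · simp only [Prod.mk.injEq] at he
      obtain ⟨rfl, rfl⟩ := he
      exact ⟨Nat.succ_pos n, by simp [area]⟩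
    · obtain ⟨hv₀, harea₀⟩ := (ih (n - h) (by omega)).1 he₀
      simp only [Prod.mk.injEq] at he
      obtain ⟨rfl, rfl⟩ := he
      refine ⟨⟨hv₀, by omega, hd, hd'⟩, ?_⟩
      simp only [area, List.map_cons, List.sum_cons] at harea₀ ⊢
      omega
  · rintro ⟨hv, harea⟩
    obtain _ | ⟨⟨d, h⟩, t⟩ := t
    · exact Or.inl (by simpa [area] using harea)
    obtain ⟨hvt, hh, hd, hd'⟩ := hv
    have ht := hvt.area_pos
    simp only [area, List.map_cons, List.sum_cons] at harea ht
    refine Or.inr ⟨h - 1, by omega, (h₀, t), (ih _ (by omega)).2 ⟨hvt, ?_⟩, d, ?_⟩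
    · simp only [area]; omega
    · obtain ⟨h, rfl⟩ := Nat.exists_eq_add_one.2 hh
      rw [add_tsub_cancel_right]
      exact ⟨by omega, hd', rfl⟩

lemma sum_extensions_lastHeight_pow (e : ℕ × List (ℤ × ℕ)) (h k : ℕ) :
    ∑ e' ∈ extensions e h, lastHeight e'.1 e'.2 ^ k =
      (h + 1) ^ k * (lastHeight e.1 e.2 + h + 1) := by
  rw [Finset.sum_congr rfl fun e' he' => ?_, Finset.sum_const, card_extensions, smul_eq_mul,
    mul_comm]
  obtain ⟨d, -, -, rfl⟩ := mem_extensions.1 he'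
  rfl

lemma sum_lastHeight_pow_encodings_succ (k n : ℕ) :
    ∑ e ∈ encodings (n + 1), lastHeight e.1 e.2 ^ k = (n + 1) ^ k +
      ∑ h ∈ range n,
        (h + 1) ^ k * (lastHeightSum (n - h) + (h + 1) * (encodings (n - h)).card) := by
  have hbase : (n + 1, []) ∉
      (range n).biUnion fun h => (encodings (n - h)).biUnion (extensions · h) := by
    simp [mem_extensions]
  have hdisj_h : ((range n : Finset ℕ) : Set ℕ).PairwiseDisjoint
      fun h => (encodings (n - h)).biUnion (extensions · h) := by
    intro h₁ _ h₂ _ hne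
    simp only [Function.onFun, Finset.disjoint_left, Finset.mem_biUnion, mem_extensions]
    rintro _ ⟨e₁, -, d₁, -, -, rfl⟩ ⟨e₂, -, d₂, -, -, he⟩
    simp only [Prod.mk.injEq, List.cons.injEq] at he
    omega
  have hdisj_e (h : ℕ) :
      (encodings (n - h) : Set (ℕ × List (ℤ × ℕ))).PairwiseDisjoint (extensions · h) := by
    intro e₁ _ e₂ _ hne
    simp only [Function.onFun, Finset.disjoint_left, mem_extensions]
    rintro _ ⟨d₁, -, -, rfl⟩ ⟨d₂, -, -, he⟩
    simp only [Prod.mk.injEq, List.cons.injEq] at he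
    exact hne (Prod.ext he.1 he.2.2)
  rw [encodings_succ, Finset.sum_insert hbase, Finset.sum_biUnion hdisj_h]
  congr 1
  refine Finset.sum_congr rfl fun h _ => ?_
  rw [Finset.sum_biUnion (hdisj_e h)]
  simp only [sum_extensions_lastHeight_pow, ← Finset.mul_sum, lastHeightSum, add_assoc,
    Finset.sum_add_distrib, Finset.sum_const, smul_eq_mul]
  ring

lemma card_encodings_succ (n : ℕ) : (encodings (n + 1)).card =
    1 + ∑ h ∈ range n, (lastHeightSum (n - h) + (h + 1) * (encodings (n - h)).card) := by
  simpa using sum_lastHeight_pow_encodings_succ 0 n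

lemma lastHeightSum_succ (n : ℕ) : lastHeightSum (n + 1) =
    n + 1 + ∑ h ∈ range n,
      (h + 1) * (lastHeightSum (n - h) + (h + 1) * (encodings (n - h)).card) := by
  simpa [lastHeightSum] using sum_lastHeight_pow_encodings_succ 1 n

lemma card_encodings_one_to_four : (encodings 1).card = 1 ∧ (encodings 2).card = 3 ∧
    (encodings 3).card = 11 ∧ (encodings 4).card = 42 := by
  have hA1 : (encodings 1).card = 1 := by simpa using card_encodings_succ 0
  have hB1 : lastHeightSum 1 = 1 := by simpa using lastHeightSum_succ 0
  have hA2 : (encodings 2).card = 3 := by simpa [hA1, hB1] using card_encodings_succ 1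
  have hB2 : lastHeightSum 2 = 4 := by simpa [hA1, hB1] using lastHeightSum_succ 1
  have hA3 : (encodings 3).card = 11 := by
    simpa [Finset.sum_range_succ, hA1, hB1, hA2, hB2] using card_encodings_succ 2
  have hB3 : lastHeightSum 3 = 16 := by
    simpa [Finset.sum_range_succ, hA1, hB1, hA2, hB2] using lastHeightSum_succ 2
  have hA4 : (encodings 4).card = 42 := by
    simpa [Finset.sum_range_succ, hA1, hB1, hA2, hB2, hA3, hB3] using card_encodings_succ 3
  exact ⟨hA1, hA2, hA3, hA4⟩

lemma card_encodings_eq_ccCount (n : ℕ) : (encodings n).card = ccCount n := by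
  rw [ccCount, ← Nat.card_eq_finsetCard]
  refine Nat.card_eq_of_bijective (fun e => ⟨decode e.1.1 e.1.2, ?_⟩) ⟨?_, ?_⟩
  · obtain ⟨hv, harea⟩ := mem_encodings.1 e.2
    exact ⟨isPolyomino_decode hv, columnConvex_decode hv, normalized_decode hv,
      (card_decode _ _).trans harea⟩
  · rintro ⟨e, he⟩ ⟨e', he'⟩ heq
    obtain ⟨h₀_eq, t_eq⟩ := decode_injective (mem_encodings.1 he).1 (mem_encodings.1 he').1
      (congrArg Subtype.val heq)
    exact Subtype.ext (Prod.ext h₀_eq t_eq)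
  · rintro ⟨P, hP, hcc, hN, rfl⟩
    obtain ⟨h₀, t, hv, rfl⟩ := exists_decode_eq hP hcc hN
    exact ⟨⟨(h₀, t), mem_encodings.2 ⟨hv, (card_decode h₀ t).symm⟩⟩, rfl⟩

end ColumnEncoding

open ColumnEncoding in
/-- Initial values and linear recurrence for the number of column-convex polyominoes. -/
theorem stmt_1 :
    ccCount 1 = 1 ∧ ccCount 2 = 3 ∧ ccCount 3 = 11 ∧ ccCount 4 = 42 ∧
    ∀ n : ℕ, 5 ≤ n →
      (ccCount n : ℤ) = 6 * (ccCount (n-1) : ℤ) - 10 * (ccCount (n-2) : ℤ)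
        + 7 * (ccCount (n-3) : ℤ) - (ccCount (n-4) : ℤ) := by
  simp only [← card_encodings_eq_ccCount]
  have hrec := linear_recurrence_of_convolutions (a := fun n => ((encodings n).card : ℤ))
    (b := fun n => (lastHeightSum n : ℤ)) (fun n => by simp [card_encodings_succ])
    (fun n => by simp [lastHeightSum_succ])
  refine ⟨card_encodings_one_to_four.1, card_encodings_one_to_four.2.1,
    card_encodings_one_to_four.2.2.1, card_encodings_one_to_four.2.2.2, fun n hn => ?_⟩
  obtain ⟨m, rfl⟩ : ∃ m, n = m + 5 := ⟨n - 5, by omega⟩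
  simpa using hrec m
end
end

section
/- Let c_n denote the number of level one cheesy polyominoes with area n (counted up to translation, with c_0 = 0). Then in ℚ⟦q⟧ one has the identity (1 − 6q + 8q² − q³) · (∑_{n≥0} c_n qⁿ) = q − 3q² + q³, i.e. the area generating function of level one cheesy polyominoes equals q(1 − 3q + q²) / (1 − 6q + 8q² − q³). -/
open Finset Filter

noncomputable section

/-- Number of level `m` cheesy polyominoes with area `n`, counted up to translation. -/
def cheesyCount (m n : ℕ) : ℕ :=
  Nat.card {P : Finset Cell // IsCheesy m P ∧ Normalized P ∧ P.card = n}

/-!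
A left-aligned level one cheesy polyomino is the same as a sequence of columns, the first an
interval and each later one an interval or two intervals around a single gap cell, in which every
component of a column meets the cells `lo s, …, hi s + 1` adjacent to the previous column `s`
(a gap cell `g` is adjacent to `g - 1`). So the columns of area `a` that may follow a column of
height `h` are `a * h + 1` in number and of total height `(a ^ 2 + a - 1) * h + 1`. Removing the
last column then shows that the number `c n` of polyominoes of area `n` and the total height `b n`
of their last columns satisfy
  `c n = 1 + ∑ (a * b (n - a) + c (n - a))`,
  `b n = n + ∑ ((a ^ 2 + a - 1) * b (n - a) + c (n - a))`,
summing over `0 < a < n`. In generating functions `C = V + U B + V C` and `B = U + W B + V C`, where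
`(1 - q) V = q`, `(1 - q) U = V` and `(1 - q) W = 2 U - q`; eliminating `B` gives the identity.
Translation classes are counted through the representative whose first column is at abscissa `0`
and starts at height `0`, since removing or appending a last column keeps it normalised.
-/

namespace Cheesy

section Extremes

variable {s : Finset ℤ} {a b d : ℤ}

/-- The least element of `s`, with the junk value `0` for `s = ∅` that `gapCells` and `heightN`
also use. -/
def lo (s : Finset ℤ) : ℤ := WithTop.untopD 0 s.min

def hi (s : Finset ℤ) : ℤ := WithBot.unbotD 0 s.max

lemma lo_eq_min' (hs : s.Nonempty) : lo s = s.min' hs := by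
  rw [lo, ← Finset.coe_min' hs, WithTop.untopD_coe]

lemma hi_eq_max' (hs : s.Nonempty) : hi s = s.max' hs := by
  rw [hi, ← Finset.coe_max' hs, WithBot.unbotD_coe]

lemma lo_le (ha : a ∈ s) : lo s ≤ a := by
  rw [lo_eq_min' ⟨a, ha⟩]; exact s.min'_le a ha

lemma le_hi (ha : a ∈ s) : a ≤ hi s := by
  rw [hi_eq_max' ⟨a, ha⟩]; exact s.le_max' a ha

lemma lo_mem (hs : s.Nonempty) : lo s ∈ s := by
  rw [lo_eq_min' hs]; exact s.min'_mem hs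

lemma hi_mem (hs : s.Nonempty) : hi s ∈ s := by
  rw [hi_eq_max' hs]; exact s.max'_mem hs

lemma lo_le_hi (hs : s.Nonempty) : lo s ≤ hi s := le_hi (lo_mem hs)

lemma lo_eq (ha : a ∈ s) (h : ∀ x ∈ s, a ≤ x) : lo s = a :=
  le_antisymm (lo_le ha) (h _ (lo_mem ⟨a, ha⟩))

lemma hi_eq (ha : a ∈ s) (h : ∀ x ∈ s, x ≤ a) : hi s = a :=
  le_antisymm (h _ (hi_mem ⟨a, ha⟩)) (le_hi ha)

lemma lo_Icc (h : a ≤ b) : lo (Icc a b) = a :=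
  lo_eq (by simp [h]) fun _ hx => (mem_Icc.1 hx).1

lemma hi_Icc (h : a ≤ b) : hi (Icc a b) = b :=
  hi_eq (by simp [h]) fun _ hx => (mem_Icc.1 hx).2

lemma subset_Icc_lo_hi : s ⊆ Icc (lo s) (hi s) :=
  fun _ ha => mem_Icc.2 ⟨lo_le ha, le_hi ha⟩

lemma lo_image_add (hs : s.Nonempty) : lo (s.image (· + d)) = lo s + d :=
  lo_eq (mem_image_of_mem _ (lo_mem hs)) (by
    simp only [mem_image, forall_exists_index, and_imp, forall_apply_eq_imp_iff₂]
    exact fun x hx => add_le_add_left (lo_le hx) d)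

lemma hi_image_add (hs : s.Nonempty) : hi (s.image (· + d)) = hi s + d :=
  hi_eq (mem_image_of_mem _ (hi_mem hs)) (by
    simp only [mem_image, forall_exists_index, and_imp, forall_apply_eq_imp_iff₂]
    exact fun x hx => add_le_add_left (le_hi hx) d)

lemma gapCells_eq (s : Finset ℤ) : gapCells s = Icc (lo s) (hi s) \ s := rfl

lemma heightN_eq (hs : s.Nonempty) : (heightN s : ℤ) = hi s - lo s + 1 := by
  have := lo_le_hi hs
  rw [show heightN s = (hi s - lo s + 1).toNat from rfl, Int.toNat_of_nonneg (by omega)]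

end Extremes

section Columns

variable {s : Finset ℤ} {a b g : ℤ}

def IsLevelOneColumn (s : Finset ℤ) : Prop :=
  (∃ a b, a ≤ b ∧ s = Icc a b) ∨ ∃ a g b, a < g ∧ g < b ∧ s = Icc a (g - 1) ∪ Icc (g + 1) b

lemma IsLevelOneColumn.nonempty (h : IsLevelOneColumn s) : s.Nonempty := by
  rcases h with ⟨a, b, hab, rfl⟩ | ⟨a, g, b, hag, _, rfl⟩
  · exact nonempty_Icc.2 hab
  · exact ⟨a, mem_union_left _ (mem_Icc.2 ⟨le_rfl, by omega⟩)⟩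

lemma numComponents_empty : numComponents ∅ = 0 := rfl

lemma numComponents_Icc (h : a ≤ b) : numComponents (Icc a b) = 1 := by
  rw [numComponents, card_eq_one]
  exact ⟨a, by ext x; simp only [mem_filter, mem_Icc, mem_singleton]; omega⟩

lemma numComponents_Icc_union_Icc (hag : a < g) (hgb : g < b) :
    numComponents (Icc a (g - 1) ∪ Icc (g + 1) b) = 2 := by
  rw [numComponents, card_eq_two]
  exact ⟨a, g + 1, by omega, by
    ext x; simp only [mem_filter, mem_union, mem_Icc, mem_insert, mem_singleton]; omega⟩

lemma lo_Icc_union_Icc (hag : a < g) : lo (Icc a (g - 1) ∪ Icc (g + 1) b) = a :=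
  lo_eq (by simp; omega) (by simp only [mem_union, mem_Icc]; omega)

lemma hi_Icc_union_Icc (hgb : g < b) : hi (Icc a (g - 1) ∪ Icc (g + 1) b) = b :=
  hi_eq (by simp; omega) (by simp only [mem_union, mem_Icc]; omega)

lemma gapSize_Icc_union_Icc (hag : a < g) (hgb : g < b) :
    gapSize (Icc a (g - 1) ∪ Icc (g + 1) b) = 1 := by
  rw [gapSize, gapCells_eq, lo_Icc_union_Icc hag, hi_Icc_union_Icc hgb, card_eq_one]
  exact ⟨g, by ext x; simp only [Finset.mem_sdiff, mem_union, mem_Icc, mem_singleton]; omega⟩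

lemma numComponents_pos (hs : s.Nonempty) : 0 < numComponents s :=
  card_pos.2 ⟨lo s, mem_filter.2 ⟨lo_mem hs, fun h => by have := lo_le h; omega⟩⟩

/-- A gap cell `g` separates the component starting at `lo s` from the one starting at the
least element of `s` above `g`. -/
lemma gapSize_eq_zero_of_numComponents_eq_one (h : numComponents s = 1) : gapSize s = 0 := by
  rw [gapSize, card_eq_zero, eq_empty_iff_forall_notMem]
  intro g hg
  rw [gapCells_eq, Finset.mem_sdiff, mem_Icc] at hg
  obtain ⟨⟨hlo, hhi⟩, hgs⟩ := hg
  have hs : s.Nonempty := nonempty_iff_ne_empty.2 (by rintro rfl; simp [numComponents] at h)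
  have hup : (s.filter (g < ·)).Nonempty :=
    ⟨hi s, mem_filter.2 ⟨hi_mem hs, lt_of_le_of_ne hhi fun e => hgs (e ▸ hi_mem hs)⟩⟩
  set u := (s.filter (g < ·)).min' hup
  obtain ⟨hu, hgu⟩ := mem_filter.1 (min'_mem _ hup)
  have hstart : u - 1 ∉ s := fun hu' => by
    rcases eq_or_lt_of_le (show g ≤ u - 1 by omega) with e | lt
    · exact hgs (e ▸ hu')
    · have := min'_le (s.filter (g < ·)) (u - 1) (mem_filter.2 ⟨hu', lt⟩); omega
  have htwo : 1 < numComponents s := one_lt_card.2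
    ⟨lo s, mem_filter.2 ⟨lo_mem hs, fun h => by have := lo_le h; omega⟩,
      u, mem_filter.2 ⟨hu, hstart⟩, by have := lo_le hu; omega⟩
  omega

lemma isLevelOneColumn_of_gapSize_le_one (hs : s.Nonempty) (h : gapSize s ≤ 1) :
    IsLevelOneColumn s := by
  have hlh := lo_le_hi hs
  interval_cases hc : gapSize s
  · refine Or.inl ⟨lo s, hi s, hlh, subset_Icc_lo_hi.antisymm fun x hx => ?_⟩
    by_contra hxs
    have : x ∈ gapCells s := Finset.mem_sdiff.2 ⟨hx, hxs⟩
    simp_all [gapSize]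
  · obtain ⟨g, hg⟩ := card_eq_one.1 hc
    have hgap : ∀ x, (lo s ≤ x ∧ x ≤ hi s) ∧ x ∉ s ↔ x = g := fun x => by
      rw [← mem_Icc, ← Finset.mem_sdiff, ← gapCells_eq, hg, mem_singleton]
    have hg' := (hgap g).2 rfl
    have hlg : lo s < g := lt_of_le_of_ne hg'.1.1 fun e => hg'.2 (e ▸ lo_mem hs)
    have hgh : g < hi s := lt_of_le_of_ne hg'.1.2 fun e => hg'.2 (e ▸ hi_mem hs)
    refine Or.inr ⟨lo s, g, hi s, hlg, hgh, ?_⟩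
    ext x
    simp only [mem_union, mem_Icc]
    constructor
    · intro hx
      have : x ≠ g := fun e => hg'.2 (e ▸ hx)
      have := lo_le hx
      have := le_hi hx
      omega
    · intro hx
      by_contra hxs
      have := (hgap x).1 ⟨⟨by omega, by omega⟩, hxs⟩
      omega

lemma isLevelOneColumn_iff :
    IsLevelOneColumn s ↔
      s.Nonempty ∧ numComponents s ≤ 2 ∧ (numComponents s = 2 → gapSize s ≤ 1) := by
  constructor
  · rintro (⟨a, b, hab, rfl⟩ | ⟨a, g, b, hag, hgb, rfl⟩)
    · simp [numComponents_Icc hab, hab]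
    · rw [numComponents_Icc_union_Icc hag hgb, gapSize_Icc_union_Icc hag hgb]
      exact ⟨⟨a, by simp; omega⟩, le_rfl, fun _ => le_rfl⟩
  · rintro ⟨hs, h2, hgap⟩
    refine isLevelOneColumn_of_gapSize_le_one hs ?_
    rcases (by have := numComponents_pos hs; omega : numComponents s = 1 ∨ numComponents s = 2)
      with h1 | h2
    · rw [gapSize_eq_zero_of_numComponents_eq_one h1]; omega
    · exact hgap h2

lemma eq_Icc_of_numComponents_eq_one (hs : s.Nonempty) (h : numComponents s = 1) :
    s = Icc (lo s) (hi s) := by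
  rcases isLevelOneColumn_of_gapSize_le_one hs
      (by rw [gapSize_eq_zero_of_numComponents_eq_one h]; omega) with
    ⟨a, b, hab, rfl⟩ | ⟨a, g, b, hag, hgb, rfl⟩
  · rw [lo_Icc hab, hi_Icc hab]
  · rw [numComponents_Icc_union_Icc hag hgb] at h; omega

/-- Level one is used here: the gap cell `g` of a column is still a right neighbour, of `g - 1`. -/
lemma IsLevelOneColumn.mem_or_sub_one_mem (h : IsLevelOneColumn s) {y : ℤ}
    (hy : y ∈ Icc (lo s) (hi s + 1)) : y ∈ s ∨ y - 1 ∈ s := by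
  rw [mem_Icc] at hy
  rcases h with ⟨a, b, hab, rfl⟩ | ⟨a, g, b, hag, hgb, rfl⟩
  · rw [lo_Icc hab, hi_Icc hab] at hy
    simp only [mem_Icc]; omega
  · rw [lo_Icc_union_Icc hag, hi_Icc_union_Icc hgb] at hy
    simp only [mem_union, mem_Icc]; omega

end Columns

section Attachment

variable {I t : Finset ℤ} {a b g : ℤ}

/-- Every connected component of `t` meets `I`. -/
def Meets (I t : Finset ℤ) : Prop := ∀ y ∈ t, ∃ y' ∈ I, SameComp t y y'

lemma sameComp_of_Icc_subset (hsub : Icc a b ⊆ t) {y y' : ℤ} (hy : y ∈ Icc a b)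
    (hy' : y' ∈ Icc a b) : SameComp t y y' := by
  rw [mem_Icc] at hy hy'
  refine ⟨hsub (mem_Icc.2 hy), hsub (mem_Icc.2 hy'), fun c h₁ h₂ => hsub (mem_Icc.2 ⟨?_, ?_⟩)⟩
  · exact (le_min hy.1 hy'.1).trans h₁
  · exact h₂.trans (max_le hy.2 hy'.2)

lemma meets_Icc (hab : a ≤ b) : Meets I (Icc a b) ↔ ∃ y ∈ I, a ≤ y ∧ y ≤ b := by
  constructor
  · intro h
    obtain ⟨y, hy, hsc⟩ := h a (by simp [hab])
    exact ⟨y, hy, mem_Icc.1 hsc.2.1⟩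
  · rintro ⟨y', hy', hay, hyb⟩ y hy
    exact ⟨y', hy', sameComp_of_Icc_subset subset_rfl hy (mem_Icc.2 ⟨hay, hyb⟩)⟩

lemma meets_Icc_union_Icc (hag : a < g) (hgb : g < b) :
    Meets I (Icc a (g - 1) ∪ Icc (g + 1) b) ↔
      (∃ y ∈ I, a ≤ y ∧ y ≤ g - 1) ∧ ∃ y ∈ I, g + 1 ≤ y ∧ y ≤ b := by
  have hg : g ∉ Icc a (g - 1) ∪ Icc (g + 1) b := by simp
  constructor
  · intro h
    obtain ⟨y, hy, hsc⟩ := h a (by simp; omega)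
    obtain ⟨y', hy', hsc'⟩ := h b (by simp; omega)
    have hya := hsc.2.1
    have hyb := hsc'.2.1
    simp only [mem_union, mem_Icc] at hya hyb
    refine ⟨⟨y, hy, by omega, ?_⟩, ⟨y', hy', ?_, by omega⟩⟩
    · by_contra
      exact hg (hsc.2.2 g (min_le_left _ _ |>.trans (by omega)) (by simp; omega))
    · by_contra
      exact hg (hsc'.2.2 g (by simp; omega) (le_max_left _ _ |>.trans' (by omega)))
  · rintro ⟨⟨y₁, hy₁, h₁, h₁'⟩, ⟨y₂, hy₂, h₂, h₂'⟩⟩ y hy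
    rcases mem_union.1 hy with hy | hy
    · exact ⟨y₁, hy₁, sameComp_of_Icc_subset subset_union_left hy (mem_Icc.2 ⟨h₁, h₁'⟩)⟩
    · exact ⟨y₂, hy₂, sameComp_of_Icc_subset subset_union_right hy (mem_Icc.2 ⟨h₂, h₂'⟩)⟩

lemma meets_image_add {d : ℤ} (h : Meets I t) : Meets (I.image (· + d)) (t.image (· + d)) := by
  simp only [Meets, mem_image, forall_exists_index, and_imp, forall_apply_eq_imp_iff₂]
  intro y hy
  obtain ⟨y', hy', hyt, hy't, hc⟩ := h y hy
  refine ⟨y' + d, ⟨y', hy', rfl⟩, mem_image.2 ⟨y, hyt, rfl⟩, mem_image.2 ⟨y', hy't, rfl⟩,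
    fun c h₁ h₂ => mem_image.2 ⟨c - d, hc _ ?_ ?_, by ring⟩⟩
  · rw [min_add_add_right] at h₁; omega
  · rw [max_add_add_right] at h₂; omega

end Attachment

section Adjacency

lemma hexAdj_symm {u v : Cell} (h : HexAdj u v) : HexAdj v u := by
  simp only [HexAdj, Set.mem_insert_iff, Set.mem_singleton_iff, Prod.mk.injEq] at h ⊢
  omega

lemma HexAdj.fst_le {u v : Cell} (h : HexAdj u v) : v.1 ≤ u.1 + 1 := by
  simp only [HexAdj, Set.mem_insert_iff, Set.mem_singleton_iff, Prod.mk.injEq] at h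
  omega

lemma HexAdj.snd_le {u v : Cell} (h : HexAdj u v) : v.2 ≤ u.2 + 1 := by
  simp only [HexAdj, Set.mem_insert_iff, Set.mem_singleton_iff, Prod.mk.injEq] at h
  omega

lemma hexAdj_succ_iff {x c y : ℤ} : HexAdj (x, c) (x + 1, y) ↔ y = c ∨ y = c + 1 := by
  simp only [HexAdj, Set.mem_insert_iff, Set.mem_singleton_iff, Prod.mk.injEq]
  omega

lemma IsLevelOneColumn.exists_hexAdj_iff {s : Finset ℤ} (hs : IsLevelOneColumn s) {x y : ℤ} :
    (∃ c ∈ s, HexAdj (x, c) (x + 1, y)) ↔ y ∈ Icc (lo s) (hi s + 1) := by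
  simp only [hexAdj_succ_iff, mem_Icc]
  constructor
  · rintro ⟨c, hc, rfl | rfl⟩ <;> constructor <;> linarith [lo_le hc, le_hi hc]
  · intro hy
    rcases hs.mem_or_sub_one_mem (mem_Icc.2 hy) with h | h
    · exact ⟨y, h, Or.inl rfl⟩
    · exact ⟨y - 1, h, Or.inr (by ring)⟩

def AdjIn (P : Finset Cell) (u v : Cell) : Prop := u ∈ P ∧ v ∈ P ∧ HexAdj u v

instance (P : Finset Cell) : Std.Symm (AdjIn P) :=
  ⟨fun _ _ h => ⟨h.2.1, h.1, hexAdj_symm h.2.2⟩⟩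

/-- A discrete intermediate value theorem. -/
theorem _root_.Relation.ReflTransGen.exists_eq_of_le {α : Type*} {r : α → α → Prop}
    {p : α → Prop} {f : α → ℤ} (hr : ∀ u v, r u v → p v ∧ f v ≤ f u + 1) {a b : α}
    (hab : Relation.ReflTransGen r a b) (ha : p a) {y : ℤ} (h₁ : f a ≤ y) (h₂ : y ≤ f b) :
    ∃ c, p c ∧ f c = y := by
  induction hab with
  | refl => exact ⟨a, ha, by omega⟩
  | tail _ huv ih =>
    rename_i u v _
    by_cases hyu : y ≤ f u
    · exact ih hyu
    · exact ⟨v, (hr u v huv).1, by have := (hr u v huv).2; omega⟩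

lemma IsPolyomino.exists_mem_eq {P : Finset Cell} (hP : IsPolyomino P) {f : Cell → ℤ}
    (hf : ∀ u v, HexAdj u v → f v ≤ f u + 1) {a b : Cell} (ha : a ∈ P) (hb : b ∈ P) {y : ℤ}
    (h₁ : f a ≤ y) (h₂ : y ≤ f b) : ∃ c ∈ P, f c = y :=
  (hP.2 a ha b hb).exists_eq_of_le (p := (· ∈ P)) (fun u v huv => ⟨huv.2.1, hf u v huv.2.2⟩)
    ha h₁ h₂

lemma IsPolyomino.exists_mem_fst_eq {P : Finset Cell} (hP : IsPolyomino P) {a b : Cell}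
    (ha : a ∈ P) (hb : b ∈ P) {x : ℤ} (h₁ : a.1 ≤ x) (h₂ : x ≤ b.1) : ∃ c ∈ P, c.1 = x :=
  IsPolyomino.exists_mem_eq hP (fun _ _ h => HexAdj.fst_le h) ha hb h₁ h₂

lemma IsPolyomino.sub_lt_card {P : Finset Cell} (hP : IsPolyomino P) {f : Cell → ℤ}
    (hf : ∀ u v, HexAdj u v → f v ≤ f u + 1) {a b : Cell} (ha : a ∈ P) (hb : b ∈ P) :
    f b - f a < P.card := by
  have hsub : Icc (f a) (f b) ⊆ P.image f := fun y hy => by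
    obtain ⟨c, hc, rfl⟩ := IsPolyomino.exists_mem_eq hP hf ha hb (mem_Icc.1 hy).1 (mem_Icc.1 hy).2
    exact mem_image_of_mem f hc
  have := (card_le_card hsub).trans card_image_le
  rw [Int.card_Icc] at this
  omega

lemma mem_columnYs {P : Finset Cell} {x y : ℤ} : y ∈ columnYs P x ↔ (x, y) ∈ P := by
  simp [columnYs]

lemma reflTransGen_of_sameComp {P : Finset Cell} {x y z : ℤ} (h : SameComp (columnYs P x) y z) :
    Relation.ReflTransGen (AdjIn P) (x, y) (x, z) := by
  wlog hyz : y ≤ z generalizing y z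
  · exact symm (this ⟨h.2.1, h.1, by simpa [min_comm, max_comm]
      using h.2.2⟩ (by omega))
  induction z, hyz using Int.leInduction with
  | base => rfl
  | succ z hyz ih =>
    have hmem : ∀ c, y ≤ c → c ≤ z + 1 → (x, c) ∈ P := fun c h₁ h₂ =>
      mem_columnYs.1 (h.2.2 c (by simpa [min_eq_left (by omega : y ≤ z + 1)] using h₁)
        (by simpa [max_eq_right (by omega : y ≤ z + 1)] using h₂))
    refine (ih ⟨h.1, mem_columnYs.2 (hmem z hyz (by omega)), fun c h₁ h₂ => ?_⟩).tail
      ⟨hmem z hyz (by omega), hmem (z + 1) (by omega) le_rfl, ?_⟩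
    · simp only [min_eq_left hyz, max_eq_right hyz] at h₁ h₂
      exact mem_columnYs.2 (hmem c h₁ (by omega))
    · simp [HexAdj]

end Adjacency

section Stacks

/-- The columns `F` of a left-aligned level one cheesy polyomino with last column at abscissa `k`
(see `isCheesy_one_and_leftAligned_iff`). -/
structure IsStack (F : ℤ → Finset ℤ) (k : ℤ) : Prop where
  eq_empty : ∀ x, x < 0 ∨ k < x → F x = ∅
  first : ∃ a b, a ≤ b ∧ F 0 = Icc a b
  column : ∀ x, 0 ≤ x → x ≤ k → IsLevelOneColumn (F x)
  meets : ∀ x, 0 ≤ x → x < k → Meets (Icc (lo (F x)) (hi (F x) + 1)) (F (x + 1))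

def LeftAligned (P : Finset Cell) : Prop := (∀ c ∈ P, 0 ≤ c.1) ∧ ∃ c ∈ P, c.1 = 0

variable {F : ℤ → Finset ℤ} {k : ℤ} {P : Finset Cell}

lemma IsStack.nonempty_iff (h : IsStack F k) {x : ℤ} : (F x).Nonempty ↔ 0 ≤ x ∧ x ≤ k := by
  constructor
  · intro hx
    by_contra hc
    rw [h.eq_empty x (by omega)] at hx
    exact not_nonempty_empty hx
  · rintro ⟨h0, hk⟩
    exact (h.column x h0 hk).nonempty

lemma IsStack.nonneg (h : IsStack F k) : 0 ≤ k := by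
  obtain ⟨a, b, hab, h0⟩ := h.first
  exact (h.nonempty_iff.1 (h0 ▸ nonempty_Icc.2 hab)).2

lemma maxX_eq_hi (P : Finset Cell) : maxX P = hi (P.image Prod.fst) := rfl

lemma le_maxX {c : Cell} (hc : c ∈ P) : c.1 ≤ maxX P := le_hi (mem_image_of_mem _ hc)

lemma IsStack.maxX_eq (h : IsStack (columnYs P) k) : maxX P = k := by
  obtain ⟨y, hy⟩ := h.nonempty_iff.2 ⟨h.nonneg, le_rfl⟩
  refine hi_eq (mem_image.2 ⟨_, mem_columnYs.1 hy, rfl⟩) ?_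
  simp only [mem_image, forall_exists_index, and_imp]
  rintro _ c hc rfl
  exact (h.nonempty_iff.1 ⟨c.2, mem_columnYs.2 hc⟩).2

/-- Every cell is joined to column `0`, column by column, through the attachment condition. -/
lemma IsStack.isPolyomino (h : IsStack (columnYs P) k) : IsPolyomino P := by
  obtain ⟨a, b, hab, h0⟩ := h.first
  have ha : a ∈ columnYs P 0 := by simp [h0, hab]
  have key : ∀ x, 0 ≤ x → ∀ y ∈ columnYs P x,
      Relation.ReflTransGen (AdjIn P) (x, y) (0, a) := by
    intro x hx
    induction x, hx using Int.leInduction with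
    | base =>
      intro y hy
      rw [h0] at hy ha
      exact reflTransGen_of_sameComp (h0 ▸ sameComp_of_Icc_subset subset_rfl hy ha)
    | succ x hx ih =>
      intro y hy
      have hxk : x < k := by have := (h.nonempty_iff.1 ⟨y, hy⟩).2; omega
      obtain ⟨y', hy', hsc⟩ := h.meets x hx hxk y hy
      obtain ⟨c, hc, hadj⟩ := (h.column x hx hxk.le).exists_hexAdj_iff.2 hy'
      exact (reflTransGen_of_sameComp hsc).trans <| Relation.ReflTransGen.head
        ⟨mem_columnYs.1 hsc.2.1, mem_columnYs.1 hc, hexAdj_symm hadj⟩ (ih c hc)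
  have hcell : ∀ u ∈ P, Relation.ReflTransGen (AdjIn P) u (0, a) := fun u hu =>
    key u.1 (h.nonempty_iff.1 ⟨u.2, mem_columnYs.2 hu⟩).1 u.2 (mem_columnYs.2 hu)
  exact ⟨⟨_, mem_columnYs.1 ha⟩, fun u hu v hv => (hcell u hu).trans (symm (hcell v hv))⟩

lemma IsStack.isCheesy_one (h : IsStack (columnYs P) k) : IsCheesy 1 P := by
  have hcol {x} (hx : (columnYs P x).Nonempty) : IsLevelOneColumn (columnYs P x) :=
    h.column x (h.nonempty_iff.1 hx).1 (h.nonempty_iff.1 hx).2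
  refine ⟨h.isPolyomino, ⟨?_, ?_⟩, fun x => ?_⟩
  · intro x hx hleft
    have hx0 : x = 0 := by
      have := (h.nonempty_iff.1 hx).1
      by_contra hne
      exact (h.nonempty_iff.2 ⟨le_rfl, h.nonneg⟩).ne_empty (hleft 0 (by omega))
    obtain ⟨a, b, hab, h0⟩ := h.first
    rw [hx0, h0, numComponents_Icc hab]
  · intro x hx hx' y hy
    obtain ⟨y', hy', hsc⟩ := h.meets x (h.nonempty_iff.1 hx).1
      (by have := (h.nonempty_iff.1 hx').2; omega) y hy
    exact ⟨y', hsc.2.1, hsc, (hcol hx).exists_hexAdj_iff.2 hy'⟩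
  · by_cases hx : (columnYs P x).Nonempty
    · exact (isLevelOneColumn_iff.1 (hcol hx)).2
    · rw [not_nonempty_iff_eq_empty.1 hx, numComponents_empty]
      omega

lemma IsStack.leftAligned (h : IsStack (columnYs P) k) : LeftAligned P := by
  obtain ⟨y₀, hy₀⟩ := h.nonempty_iff.2 ⟨le_rfl, h.nonneg⟩
  exact ⟨fun c hc => (h.nonempty_iff.1 ⟨c.2, mem_columnYs.2 hc⟩).1, _, mem_columnYs.1 hy₀, rfl⟩

/-- A path from the first to the last column crosses every column in between. -/
lemma isStack_of_isCheesy_one (hP : IsCheesy 1 P) (hL : LeftAligned P) :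
    IsStack (columnYs P) (maxX P) := by
  obtain ⟨hpoly, ⟨hfirst, hrsd⟩, hcol⟩ := hP
  obtain ⟨hx0, c₀, hc₀, hc₀x⟩ := hL
  obtain ⟨cₘ, hcₘ, hcₘx⟩ := mem_image.1 (hi_mem (hpoly.1.image Prod.fst))
  rw [← maxX_eq_hi] at hcₘx
  have hne : ∀ x, 0 ≤ x → x ≤ maxX P → (columnYs P x).Nonempty := fun x h₁ h₂ => by
    obtain ⟨c, hc, rfl⟩ :=
      IsPolyomino.exists_mem_fst_eq hpoly hc₀ hcₘ (x := x) (by omega) (by omega)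
    exact ⟨c.2, mem_columnYs.2 hc⟩
  have hempty : ∀ x, x < 0 ∨ maxX P < x → columnYs P x = ∅ := fun x hx => by
    refine eq_empty_of_forall_notMem fun y hy => ?_
    have := hx0 _ (mem_columnYs.1 hy)
    have := le_maxX (mem_columnYs.1 hy)
    simp only at *
    omega
  have h0 : 0 ≤ maxX P := hc₀x ▸ le_maxX hc₀
  refine ⟨hempty, ?_, fun x h₁ h₂ => isLevelOneColumn_iff.2 ⟨hne x h₁ h₂, hcol x⟩, ?_⟩
  · have hone := hfirst 0 (hne 0 le_rfl h0) fun x hx => hempty x (Or.inl hx)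
    exact ⟨_, _, lo_le_hi (hne 0 le_rfl h0),
      eq_Icc_of_numComponents_eq_one (hne 0 le_rfl h0) hone⟩
  · intro x h₁ h₂ y hy
    obtain ⟨y', _, hsc, hadj⟩ :=
      hrsd x (hne x h₁ h₂.le) (hne (x + 1) (by omega) (by omega)) y hy
    exact ⟨y', (isLevelOneColumn_iff.2 ⟨hne x h₁ h₂.le, hcol x⟩).exists_hexAdj_iff.1 hadj, hsc⟩

theorem isCheesy_one_and_leftAligned_iff :
    IsCheesy 1 P ∧ LeftAligned P ↔ IsStack (columnYs P) (maxX P) :=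
  ⟨fun h => isStack_of_isCheesy_one h.1 h.2, fun h => ⟨h.isCheesy_one, h.leftAligned⟩⟩

end Stacks

section Translation

def shiftY (d : ℤ) (P : Finset Cell) : Finset Cell := P.image fun c => (c.1, c.2 + d)

variable {F : ℤ → Finset ℤ} {k d : ℤ} {P : Finset Cell}

lemma columnYs_shiftY (x : ℤ) : columnYs (shiftY d P) x = (columnYs P x).image (· + d) := by
  ext y
  simp only [mem_columnYs, shiftY, mem_image, Prod.mk.injEq]
  constructor
  · rintro ⟨c, hc, rfl, rfl⟩; exact ⟨c.2, hc, rfl⟩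
  · rintro ⟨y', hy', rfl⟩; exact ⟨_, hy', rfl, rfl⟩

lemma shiftY_shiftY (d e : ℤ) (P : Finset Cell) : shiftY d (shiftY e P) = shiftY (e + d) P := by
  simp only [shiftY, image_image, Function.comp_def, add_assoc]

lemma shiftY_zero (P : Finset Cell) : shiftY 0 P = P := by simp [shiftY]

lemma card_shiftY : (shiftY d P).card = P.card :=
  card_image_of_injective _ fun u v h => by simp_all [Prod.ext_iff]

lemma maxX_shiftY : maxX (shiftY d P) = maxX P := by
  simp only [maxX_eq_hi, shiftY, image_image, Function.comp_def]

lemma IsLevelOneColumn.image_add {s : Finset ℤ} (h : IsLevelOneColumn s) :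
    IsLevelOneColumn (s.image (· + d)) := by
  rcases h with ⟨a, b, hab, rfl⟩ | ⟨a, g, b, hag, hgb, rfl⟩
  · exact Or.inl ⟨a + d, b + d, by omega, image_add_right_Icc a b d⟩
  · refine Or.inr ⟨a + d, g + d, b + d, by omega, by omega, ?_⟩
    rw [image_union, image_add_right_Icc, image_add_right_Icc]
    congr 2 <;> ring

lemma IsStack.image_add (h : IsStack F k) : IsStack (fun x => (F x).image (· + d)) k where
  eq_empty x hx := by rw [h.eq_empty x hx, image_empty]
  first := by
    obtain ⟨a, b, hab, h0⟩ := h.first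
    exact ⟨a + d, b + d, by omega, by rw [h0, image_add_right_Icc]⟩
  column x h₁ h₂ := (h.column x h₁ h₂).image_add
  meets x h₁ h₂ := by
    have hne := (h.column x h₁ h₂.le).nonempty
    rw [lo_image_add hne, hi_image_add hne, add_right_comm, ← image_add_right_Icc]
    exact meets_image_add (h.meets x h₁ h₂)

lemma IsStack.shiftY (h : IsStack (columnYs P) (maxX P)) :
    IsStack (columnYs (shiftY d P)) (maxX (shiftY d P)) := by
  rw [maxX_shiftY, funext columnYs_shiftY]
  exact h.image_add

/-- Two normalisations of the vertical position that move along with `shiftY` select equally many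
representatives. -/
lemma natCard_eq_of_shiftY {p : Finset Cell → Prop} (hp : ∀ d P, p P → p (shiftY d P))
    {f g : Finset Cell → ℤ} (hf : ∀ d P, p P → f (shiftY d P) = f P + d)
    (hg : ∀ d P, p P → g (shiftY d P) = g P + d) :
    Nat.card {P // p P ∧ f P = 0} = Nat.card {P // p P ∧ g P = 0} := by
  refine Nat.card_congr
    { toFun := fun P => ⟨shiftY (-g P) P, hp _ _ P.2.1, by rw [hg _ _ P.2.1]; ring⟩
      invFun := fun Q => ⟨shiftY (-f Q) Q, hp _ _ Q.2.1, by rw [hf _ _ Q.2.1]; ring⟩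
      left_inv := fun P => Subtype.ext ?_
      right_inv := fun Q => Subtype.ext ?_ }
  · simp only [hf _ _ P.2.1, P.2.2, shiftY_shiftY, zero_add, add_neg_cancel, shiftY_zero]
  · simp only [hg _ _ Q.2.1, Q.2.2, shiftY_shiftY, zero_add, add_neg_cancel, shiftY_zero]

lemma normalized_iff : Normalized P ↔ LeftAligned P ∧ lo (P.image Prod.snd) = 0 := by
  constructor
  · rintro ⟨hnn, hx, c, hc, hc0⟩
    refine ⟨⟨fun c hc => (hnn c hc).1, hx⟩, lo_eq (mem_image.2 ⟨c, hc, hc0⟩) ?_⟩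
    simp only [mem_image, forall_exists_index, and_imp]
    rintro _ c hc rfl
    exact (hnn c hc).2
  · rintro ⟨⟨hx0, c, hc, hcx⟩, hlo⟩
    obtain ⟨c', hc', hc'y⟩ := mem_image.1 (lo_mem (Finset.Nonempty.image ⟨c, hc⟩ Prod.snd))
    exact ⟨fun c hc => ⟨hx0 c hc, hlo ▸ lo_le (mem_image_of_mem _ hc)⟩, ⟨c, hc, hcx⟩,
      ⟨c', hc', hc'y.trans hlo⟩⟩

end Translation

section Anchored

variable {n : ℕ} {P : Finset Cell}

open scoped Classical in
/-- One representative of each translation class of level one cheesy polyominoes with `n` cells: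
the one whose first column is at abscissa `0` and starts at height `0`. The box only serves to make
the set finite (see `mem_anchored`). -/
def anchored (n : ℕ) : Finset (Finset Cell) :=
  (Icc ((-n : ℤ), (-n : ℤ)) (n, n)).powerset.filter fun P =>
    IsStack (columnYs P) (maxX P) ∧ P.card = n ∧ lo (columnYs P 0) = 0

lemma mem_anchored :
    P ∈ anchored n ↔ IsStack (columnYs P) (maxX P) ∧ P.card = n ∧ lo (columnYs P 0) = 0 := by
  classical
  rw [anchored, mem_filter, mem_powerset, and_iff_right_iff_imp]
  rintro ⟨h, rfl, h0⟩ c hc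
  have hP := h.isPolyomino
  have h00 : ((0 : ℤ), (0 : ℤ)) ∈ P := by
    have := lo_mem (h.nonempty_iff.2 ⟨le_rfl, h.nonneg⟩)
    rwa [h0, mem_columnYs] at this
  have hx₁ := IsPolyomino.sub_lt_card hP (f := Prod.fst) (fun _ _ h => HexAdj.fst_le h) h00 hc
  have hx₂ := IsPolyomino.sub_lt_card hP (f := Prod.fst) (fun _ _ h => HexAdj.fst_le h) hc h00
  have hy₁ := IsPolyomino.sub_lt_card hP (f := Prod.snd) (fun _ _ h => HexAdj.snd_le h) h00 hc
  have hy₂ := IsPolyomino.sub_lt_card hP (f := Prod.snd) (fun _ _ h => HexAdj.snd_le h) hc h00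
  simp only at hx₁ hx₂ hy₁ hy₂
  rw [mem_Icc, Prod.mk_le_mk, Prod.le_def]
  omega

lemma cheesyCount_one_eq_card_anchored (n : ℕ) : cheesyCount 1 n = (anchored n).card := by
  let p : Finset Cell → Prop := fun P => IsStack (columnYs P) (maxX P) ∧ P.card = n
  have hp : ∀ d P, p P → p (shiftY d P) := fun d P hP => ⟨hP.1.shiftY, card_shiftY.trans hP.2⟩
  calc cheesyCount 1 n = Nat.card {P // p P ∧ lo (P.image Prod.snd) = 0} := by
        refine Nat.card_congr (Equiv.subtypeEquivRight fun P => ?_)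
        rw [normalized_iff]
        show _ ↔ (IsStack _ _ ∧ _) ∧ _
        rw [← isCheesy_one_and_leftAligned_iff]
        tauto
    _ = Nat.card {P // p P ∧ lo (columnYs P 0) = 0} := by
        refine natCard_eq_of_shiftY hp (fun d P hP => ?_) (fun d P hP => ?_)
        · have hne : P.Nonempty := hP.1.isPolyomino.1
          have : (shiftY d P).image Prod.snd = (P.image Prod.snd).image (· + d) := by
            simp only [shiftY, image_image]; rfl
          rw [this, lo_image_add (hne.image _)]
        · rw [columnYs_shiftY, lo_image_add (hP.1.nonempty_iff.2 ⟨le_rfl, hP.1.nonneg⟩)]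
    _ = (anchored n).card := by
        rw [← Nat.card_eq_finsetCard]
        exact Nat.card_congr (Equiv.subtypeEquivRight fun P => by rw [mem_anchored]; tauto)

end Anchored

section Attachable

variable {a : ℕ} {m M : ℤ}

lemma card_Icc_union_Icc {α g β : ℤ} (hαg : α < g) (hgβ : g < β) :
    ((Icc α (g - 1) ∪ Icc (g + 1) β).card : ℤ) = β - α := by
  rw [card_union_of_disjoint (disjoint_left.2 fun x h₁ h₂ => by
    simp only [mem_Icc] at h₁ h₂; omega)]
  push_cast
  rw [Int.card_Icc_of_le _ _ (by omega), Int.card_Icc_of_le _ _ (by omega)]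
  ring

lemma heightN_Icc {α β : ℤ} (h : α ≤ β) : (heightN (Icc α β) : ℤ) = β - α + 1 := by
  rw [heightN_eq (nonempty_Icc.2 h), lo_Icc h, hi_Icc h]

lemma heightN_Icc_union_Icc {α g β : ℤ} (hαg : α < g) (hgβ : g < β) :
    (heightN (Icc α (g - 1) ∪ Icc (g + 1) β) : ℤ) = β - α + 1 := by
  rw [heightN_eq ⟨α, by simp; omega⟩, lo_Icc_union_Icc hαg, hi_Icc_union_Icc hgβ]

def intervalColumns (a : ℕ) (m M : ℤ) : Finset (Finset ℤ) :=
  (Icc (m - a + 1) (M + 1)).image fun α => Icc α (α + a - 1)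

/-- Indexed by the size `k` of the lower component and the gap cell `g`. -/
def splitColumns (a : ℕ) (m M : ℤ) : Finset (Finset ℤ) :=
  (Icc (1 : ℤ) (a - 1) ×ˢ Icc (m + 1) M).image fun p =>
    Icc (p.2 - p.1) (p.2 - 1) ∪ Icc (p.2 + 1) (p.2 + a - p.1)

def attachable (a : ℕ) (m M : ℤ) : Finset (Finset ℤ) :=
  intervalColumns a m M ∪ splitColumns a m M

lemma mem_attachable (ha : 1 ≤ a) (hmM : m ≤ M) {t : Finset ℤ} :
    t ∈ attachable a m M ↔ IsLevelOneColumn t ∧ t.card = a ∧ Meets (Icc m (M + 1)) t := by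
  simp only [attachable, intervalColumns, splitColumns, mem_union, mem_image, mem_product,
    mem_Icc, Prod.exists]
  constructor
  · rintro (⟨α, hα, rfl⟩ | ⟨k, g, ⟨hk, hg⟩, rfl⟩)
    · refine ⟨Or.inl ⟨α, α + a - 1, by omega, rfl⟩, ?_,
        (meets_Icc (by omega)).2 ⟨max α m, mem_Icc.2 ⟨le_max_right _ _, by omega⟩, by omega⟩⟩
      zify
      rw [Int.card_Icc_of_le _ _ (by omega)]
      ring
    · have hlo : g - k < g := by omega
      have hhi : g < g + a - k := by omega
      refine ⟨Or.inr ⟨g - k, g, g + a - k, hlo, hhi, rfl⟩,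
        by zify; rw [card_Icc_union_Icc hlo hhi]; ring, (meets_Icc_union_Icc hlo hhi).2
        ⟨⟨max (g - k) m, mem_Icc.2 ⟨le_max_right _ _, by omega⟩, by omega⟩,
          ⟨g + 1, mem_Icc.2 ⟨by omega, by omega⟩, le_rfl, by omega⟩⟩⟩
  · rintro ⟨⟨α, β, hαβ, rfl⟩ | ⟨α, g, β, hαg, hgβ, rfl⟩, hcard, hmeets⟩
    · have := Int.card_Icc_of_le _ _ (show α ≤ β + 1 by omega)
      rw [hcard] at this
      obtain ⟨y, hy, h₁, h₂⟩ := (meets_Icc hαβ).1 hmeets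
      rw [mem_Icc] at hy
      exact Or.inl ⟨α, ⟨by omega, by omega⟩, by congr 1; omega⟩
    · have := card_Icc_union_Icc hαg hgβ
      rw [hcard] at this
      obtain ⟨⟨y₁, hy₁, h₁, h₁'⟩, ⟨y₂, hy₂, h₂, h₂'⟩⟩ := (meets_Icc_union_Icc hαg hgβ).1 hmeets
      rw [mem_Icc] at hy₁ hy₂
      exact Or.inr ⟨g - α, g, ⟨⟨by omega, by omega⟩, by omega, by omega⟩, by congr 2 <;> omega⟩

lemma disjoint_intervalColumns_splitColumns :
    Disjoint (intervalColumns a m M) (splitColumns a m M) := by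
  simp only [intervalColumns, splitColumns, disjoint_left, mem_image, mem_product, mem_Icc,
    Prod.exists, not_exists, not_and, forall_exists_index, and_imp]
  rintro _ α - - rfl k g hk₁ hk₂ hg₁ hg₂ h
  have hmem := fun y => congrArg (y ∈ ·) h
  have := hmem (g - 1)
  have := hmem g
  have := hmem (g + 1)
  simp only [mem_union, mem_Icc, eq_iff_iff] at *
  omega

lemma card_intervalColumns (ha : 1 ≤ a) (hmM : m ≤ M) :
    ((intervalColumns a m M).card : ℤ) = M - m + a + 1 := by
  rw [intervalColumns, card_image_of_injOn fun α _ β _ h => by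
    have := congrArg lo h; rwa [lo_Icc (by omega), lo_Icc (by omega)] at this,
    Int.card_Icc_of_le _ _ (by omega)]
  ring

lemma card_splitColumns (ha : 1 ≤ a) (hmM : m ≤ M) :
    ((splitColumns a m M).card : ℤ) = (a - 1) * (M - m) := by
  rw [splitColumns, card_image_of_injOn, card_product]
  · push_cast
    rw [Int.card_Icc_of_le _ _ (by omega), Int.card_Icc_of_le _ _ (by omega)]
    ring
  · rintro ⟨k, g⟩ hkg ⟨k', g'⟩ hkg' h
    simp only [coe_product, Set.mem_prod, mem_coe, mem_Icc] at hkg hkg' h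
    -- a split column determines its lowest cell `g - k` and its gap cell `g`
    have hmem := fun y => congrArg (y ∈ ·) h
    have := hmem g
    have := hmem g'
    have := hmem (g - k)
    have := hmem (g' - k')
    simp only [mem_union, mem_Icc, eq_iff_iff] at *
    ext <;> simp only <;> omega

lemma card_attachable (ha : 1 ≤ a) (hmM : m ≤ M) :
    ((attachable a m M).card : ℤ) = a * (M - m + 1) + 1 := by
  rw [attachable, card_union_of_disjoint disjoint_intervalColumns_splitColumns]
  push_cast
  rw [card_intervalColumns ha hmM, card_splitColumns ha hmM]
  ring

lemma sum_heightN_attachable (ha : 1 ≤ a) (hmM : m ≤ M) :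
    ∑ t ∈ attachable a m M, (heightN t : ℤ) = (a ^ 2 + a - 1) * (M - m + 1) + 1 := by
  have h₁ : ∀ t ∈ intervalColumns a m M, (heightN t : ℤ) = a := by
    simp only [intervalColumns, mem_image, forall_exists_index, and_imp]
    rintro _ α - rfl
    rw [heightN_Icc (by omega)]; ring
  have h₂ : ∀ t ∈ splitColumns a m M, (heightN t : ℤ) = a + 1 := by
    simp only [splitColumns, mem_image, mem_product, mem_Icc, forall_exists_index, and_imp,
      Prod.forall]
    rintro _ k g hk₁ hk₂ - - rfl
    rw [heightN_Icc_union_Icc (by omega) (by omega)]; ring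
  rw [attachable, sum_union disjoint_intervalColumns_splitColumns, sum_congr rfl h₁,
    sum_congr rfl h₂, sum_const, sum_const, nsmul_eq_mul, nsmul_eq_mul,
    card_intervalColumns ha hmM, card_splitColumns ha hmM]
  ring

end Attachable

section Decomposition

open Function

variable {F : ℤ → Finset ℤ} {k : ℤ} {P : Finset Cell} {s : Finset ℤ} {n : ℕ}

lemma IsStack.update_succ (h : IsStack F k) (hs : IsLevelOneColumn s)
    (hm : Meets (Icc (lo (F k)) (hi (F k) + 1)) s) : IsStack (update F (k + 1) s) (k + 1) where
  eq_empty x hx := by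
    have := h.nonneg
    rw [update_of_ne (by omega)]
    exact h.eq_empty x (by omega)
  first := by
    rw [update_of_ne (by have := h.nonneg; omega)]
    exact h.first
  column x h₁ h₂ := by
    rcases eq_or_lt_of_le h₂ with rfl | h₂
    · rwa [update_self]
    · rw [update_of_ne (by omega)]
      exact h.column x h₁ (by omega)
  meets x h₁ h₂ := by
    rw [update_of_ne (by omega)]
    rcases eq_or_lt_of_le (show x ≤ k by omega) with rfl | h₂
    · rwa [update_self]
    · rw [update_of_ne (by omega)]
      exact h.meets x h₁ h₂

lemma IsStack.update_last (h : IsStack F k) (hk : 1 ≤ k) : IsStack (update F k ∅) (k - 1) where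
  eq_empty x hx := by
    rcases eq_or_ne x k with rfl | hxk
    · rw [update_self]
    · rw [update_of_ne hxk]
      exact h.eq_empty x (by omega)
  first := by
    rw [update_of_ne (by omega)]
    exact h.first
  column x h₁ h₂ := by
    rw [update_of_ne (by omega)]
    exact h.column x h₁ (by omega)
  meets x h₁ h₂ := by
    rw [update_of_ne (by omega), update_of_ne (by omega)]
    exact h.meets x h₁ (by omega)

def snoc (P : Finset Cell) (s : Finset ℤ) : Finset Cell := P ∪ {maxX P + 1} ×ˢ s

def dropLast (P : Finset Cell) : Finset Cell := P.filter fun c => c.1 < maxX P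

lemma columnYs_snoc (P : Finset Cell) (s : Finset ℤ) :
    columnYs (snoc P s) = update (columnYs P) (maxX P + 1) s := by
  ext x y
  rw [mem_columnYs, update_apply]
  split_ifs with hx
  · subst hx
    have : (maxX P + 1, y) ∉ P := fun hc => by have := le_maxX hc; simp only at this; omega
    simp only [snoc, mem_union, mem_product, mem_singleton, true_and, this, false_or]
  · simp only [snoc, mem_union, mem_product, mem_singleton, hx, false_and, or_false,
      mem_columnYs]

lemma columnYs_dropLast (P : Finset Cell) :
    columnYs (dropLast P) = update (columnYs P) (maxX P) ∅ := by
  ext x y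
  rw [mem_columnYs, update_apply]
  split_ifs with hx
  · simp [dropLast, hx]
  · simp only [dropLast, mem_filter, mem_columnYs, and_iff_left_iff_imp]
    intro hc
    have := le_maxX hc
    simp only at this
    omega

lemma maxX_snoc (P : Finset Cell) (hs : s.Nonempty) : maxX (snoc P s) = maxX P + 1 := by
  obtain ⟨y, hy⟩ := hs
  refine hi_eq (mem_image.2 ⟨(maxX P + 1, y), by simp [snoc, hy], rfl⟩) ?_
  simp only [snoc, mem_image, mem_union, mem_product, mem_singleton, forall_exists_index, and_imp]
  rintro _ c (hc | ⟨hc, -⟩) rfl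
  · have := le_maxX hc; omega
  · omega

lemma lastCol_snoc (P : Finset Cell) (hs : s.Nonempty) : lastCol (snoc P s) = s := by
  rw [lastCol, maxX_snoc P hs, columnYs_snoc, update_self]

lemma dropLast_snoc (P : Finset Cell) (hs : s.Nonempty) : dropLast (snoc P s) = P := by
  ext c
  rw [dropLast, maxX_snoc P hs]
  simp only [snoc, mem_filter, mem_union, mem_product, mem_singleton]
  constructor
  · rintro ⟨hc | ⟨hc, -⟩, hlt⟩
    · exact hc
    · omega
  · intro hc
    exact ⟨Or.inl hc, by have := le_maxX hc; omega⟩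

lemma card_snoc (P : Finset Cell) (s : Finset ℤ) : (snoc P s).card = P.card + s.card := by
  rw [snoc, card_union_of_disjoint, card_product, card_singleton, one_mul]
  refine disjoint_left.2 fun c hc hc' => ?_
  have := le_maxX hc
  simp only [mem_product, mem_singleton] at hc'
  omega

lemma isStack_snoc (h : IsStack (columnYs P) (maxX P)) (hs : IsLevelOneColumn s)
    (hm : Meets (Icc (lo (lastCol P)) (hi (lastCol P) + 1)) s) :
    IsStack (columnYs (snoc P s)) (maxX (snoc P s)) := by
  rw [columnYs_snoc, maxX_snoc P hs.nonempty]
  exact h.update_succ hs hm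

lemma maxX_dropLast (h : IsStack (columnYs P) (maxX P)) (hk : 1 ≤ maxX P) :
    maxX (dropLast P) = maxX P - 1 := by
  refine IsStack.maxX_eq ?_
  rw [columnYs_dropLast]
  exact h.update_last hk

lemma isStack_dropLast (h : IsStack (columnYs P) (maxX P)) (hk : 1 ≤ maxX P) :
    IsStack (columnYs (dropLast P)) (maxX (dropLast P)) := by
  rw [columnYs_dropLast, maxX_dropLast h hk]
  exact h.update_last hk

lemma lastCol_dropLast (h : IsStack (columnYs P) (maxX P)) (hk : 1 ≤ maxX P) :
    lastCol (dropLast P) = columnYs P (maxX P - 1) := by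
  rw [lastCol, maxX_dropLast h hk, columnYs_dropLast, update_of_ne (by omega)]

lemma snoc_dropLast (h : IsStack (columnYs P) (maxX P)) (hk : 1 ≤ maxX P) :
    snoc (dropLast P) (lastCol P) = P := by
  ext c
  rw [snoc, maxX_dropLast h hk, sub_add_cancel]
  simp only [dropLast, lastCol, mem_union, mem_filter, mem_product, mem_singleton, mem_columnYs]
  constructor
  · rintro (⟨hc, -⟩ | ⟨hc, hc'⟩)
    · exact hc
    · rwa [← hc] at hc'
  · intro hc
    rcases lt_or_eq_of_le (le_maxX hc) with hlt | heq
    · exact Or.inl ⟨hc, hlt⟩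
    · exact Or.inr ⟨heq, by rwa [← heq]⟩

end Decomposition

section Recurrence

open Function

variable {n : ℕ} {P : Finset Cell}

lemma lastCol_nonempty (h : IsStack (columnYs P) (maxX P)) : (lastCol P).Nonempty :=
  h.nonempty_iff.2 ⟨h.nonneg, le_rfl⟩

lemma snoc_mem_anchored (hP : P ∈ anchored n) {s : Finset ℤ} (hs : IsLevelOneColumn s)
    (hm : Meets (Icc (lo (lastCol P)) (hi (lastCol P) + 1)) s) :
    snoc P s ∈ anchored (n + s.card) := by
  obtain ⟨h, hcard, h0⟩ := mem_anchored.1 hP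
  refine mem_anchored.2 ⟨isStack_snoc h hs hm, by rw [card_snoc, hcard], ?_⟩
  rwa [columnYs_snoc, update_of_ne (by have := h.nonneg; omega)]

lemma dropLast_mem_anchored (hP : P ∈ anchored n) (hk : 1 ≤ maxX P) :
    dropLast P ∈ anchored (n - (lastCol P).card) := by
  obtain ⟨h, hcard, h0⟩ := mem_anchored.1 hP
  have hsplit := card_snoc (dropLast P) (lastCol P)
  rw [snoc_dropLast h hk, hcard] at hsplit
  refine mem_anchored.2 ⟨isStack_dropLast h hk, by omega, ?_⟩
  rwa [columnYs_dropLast, update_of_ne (by omega)]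

lemma lastCol_mem_attachable (hP : P ∈ anchored n) (hk : 1 ≤ maxX P) :
    lastCol P ∈ attachable (lastCol P).card (lo (lastCol (dropLast P)))
      (hi (lastCol (dropLast P))) := by
  obtain ⟨h, -, -⟩ := mem_anchored.1 hP
  have hm := h.meets (maxX P - 1) (by omega) (by omega)
  rw [sub_add_cancel] at hm
  rw [mem_attachable (card_pos.2 (lastCol_nonempty h))
    (lo_le_hi (lastCol_nonempty (isStack_dropLast h hk))), lastCol_dropLast h hk]
  exact ⟨h.column _ h.nonneg le_rfl, rfl, hm⟩

/-- Removing the last column is a bijection from the anchored polyominoes with at least two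
columns onto the triples (area `a` of the last column, the rest, an attachable column). -/
theorem sum_filter_anchored {R : Type*} [AddCommMonoid R] (f : Finset Cell → R) :
    ∑ P ∈ (anchored n).filter (1 ≤ maxX ·), f P =
      ∑ a ∈ Icc 1 (n - 1), ∑ P ∈ anchored (n - a),
        ∑ s ∈ attachable a (lo (lastCol P)) (hi (lastCol P)), f (snoc P s) := by
  rw [sum_congr rfl fun a _ => sum_sigma' (anchored (n - a))
    (fun P => attachable a (lo (lastCol P)) (hi (lastCol P))) fun P s => f (snoc P s), sum_sigma']
  refine sum_nbij' (fun P => ⟨(lastCol P).card, dropLast P, lastCol P⟩)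
    (fun x => snoc x.2.1 x.2.2) ?_ ?_ ?_ ?_ ?_
  · intro P hP
    obtain ⟨hP, hk⟩ := mem_filter.1 hP
    obtain ⟨h, hcard, -⟩ := mem_anchored.1 hP
    have hsplit := card_snoc (dropLast P) (lastCol P)
    rw [snoc_dropLast h hk, hcard] at hsplit
    have hpos := card_pos.2 (isStack_dropLast h hk).isPolyomino.1
    have hpos' := card_pos.2 (lastCol_nonempty h)
    simp only [mem_sigma, mem_Icc]
    exact ⟨⟨hpos', by omega⟩, dropLast_mem_anchored hP hk, lastCol_mem_attachable hP hk⟩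
  · rintro ⟨a, P, s⟩ hx
    simp only [mem_sigma, mem_Icc] at hx
    obtain ⟨ha, hP, hs⟩ := hx
    obtain ⟨hcol, hcard, hm⟩ := (mem_attachable (by omega)
      (lo_le_hi (lastCol_nonempty (mem_anchored.1 hP).1))).1 hs
    have hsnoc := snoc_mem_anchored hP hcol hm
    rw [hcard, Nat.sub_add_cancel (by omega)] at hsnoc
    refine mem_filter.2 ⟨hsnoc, ?_⟩
    rw [maxX_snoc P hcol.nonempty]
    have := (mem_anchored.1 hP).1.nonneg
    omega
  · intro P hP
    obtain ⟨hP, hk⟩ := mem_filter.1 hP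
    exact snoc_dropLast (mem_anchored.1 hP).1 hk
  · rintro ⟨a, P, s⟩ hx
    simp only [mem_sigma, mem_Icc] at hx
    obtain ⟨⟨ha, -⟩, hP, hs⟩ := hx
    obtain ⟨hcol, rfl, -⟩ := (mem_attachable ha
      (lo_le_hi (lastCol_nonempty (mem_anchored.1 hP).1))).1 hs
    simp only [lastCol_snoc P hcol.nonempty, dropLast_snoc P hcol.nonempty]
  · intro P hP
    rw [snoc_dropLast (mem_anchored.1 (mem_filter.1 hP).1).1 (mem_filter.1 hP).2]

lemma columnYs_singleton_product (x₀ : ℤ) (s : Finset ℤ) :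
    columnYs ({x₀} ×ˢ s) = update (fun _ => ∅) x₀ s := by
  ext x y
  rw [mem_columnYs, update_apply]
  split_ifs with hx
  · simp [hx]
  · simp [Ne.symm hx]

lemma isStack_singleton_product {b : ℤ} (hb : 0 ≤ b) :
    IsStack (columnYs ({0} ×ˢ Icc 0 b)) 0 where
  eq_empty x hx := by rw [columnYs_singleton_product, update_of_ne (by omega)]
  first := ⟨0, b, hb, by rw [columnYs_singleton_product, update_self]⟩
  column x h₁ h₂ := by
    rw [columnYs_singleton_product, show x = 0 by omega, update_self]
    exact Or.inl ⟨0, b, hb, rfl⟩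
  meets x h₁ h₂ := by omega

lemma filter_anchored_maxX_lt_one (hn : 1 ≤ n) :
    (anchored n).filter (¬ 1 ≤ maxX ·) = {{0} ×ˢ Icc 0 ((n : ℤ) - 1)} := by
  ext P
  rw [mem_filter, mem_singleton, mem_anchored]
  constructor
  · rintro ⟨⟨h, hcard, h0⟩, hk⟩
    rw [show maxX P = 0 by have := h.nonneg; omega] at h
    obtain ⟨a, b, hab, hcol⟩ := h.first
    rw [hcol, lo_Icc hab] at h0
    subst h0
    have hP : P = {0} ×ˢ Icc 0 b := by
      ext c
      rw [mem_product, mem_singleton, ← hcol, mem_columnYs]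
      constructor
      · intro hc
        have hc₁ := h.nonempty_iff.1 ⟨c.2, mem_columnYs.2 hc⟩
        exact ⟨by omega, by rwa [show c = (0, c.2) from Prod.ext (by omega) rfl] at hc⟩
      · rintro ⟨hc₁, hc₂⟩
        rwa [← hc₁] at hc₂
    rw [hP, card_product, card_singleton, one_mul] at hcard
    have := Int.card_Icc_of_le _ _ (show (0 : ℤ) ≤ b + 1 by omega)
    rw [hP]
    congr
    omega
  · rintro rfl
    have h := isStack_singleton_product (show (0 : ℤ) ≤ n - 1 by omega)
    refine ⟨⟨by rw [h.maxX_eq]; exact h, ?_, ?_⟩, by rw [h.maxX_eq]; omega⟩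
    · rw [card_product, card_singleton, one_mul, Int.card_Icc]; omega
    · rw [columnYs_singleton_product, update_self, lo_Icc (by omega)]

lemma sum_anchored {R : Type*} [AddCommMonoid R] (hn : 1 ≤ n) (f : Finset Cell → R) :
    ∑ P ∈ anchored n, f P = f ({0} ×ˢ Icc 0 ((n : ℤ) - 1)) +
      ∑ a ∈ Icc 1 (n - 1), ∑ P ∈ anchored (n - a),
        ∑ s ∈ attachable a (lo (lastCol P)) (hi (lastCol P)), f (snoc P s) := by
  rw [← sum_filter_add_sum_filter_not (anchored n) (1 ≤ maxX ·), sum_filter_anchored,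
    filter_anchored_maxX_lt_one hn, sum_singleton, add_comm]

def count (n : ℕ) : ℚ := (anchored n).card

def lastHeightSum (n : ℕ) : ℚ := ∑ P ∈ anchored n, (heightN (lastCol P) : ℚ)

lemma sum_attachable_one {k a : ℕ} (hP : P ∈ anchored k) (ha : 1 ≤ a) :
    ∑ _s ∈ attachable a (lo (lastCol P)) (hi (lastCol P)), (1 : ℚ) =
      a * heightN (lastCol P) + 1 := by
  have hne := lastCol_nonempty (mem_anchored.1 hP).1
  have := card_attachable ha (lo_le_hi hne)
  rw [← heightN_eq hne] at this
  rw [sum_const, nsmul_one]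
  exact_mod_cast this

lemma sum_attachable_heightN {k a : ℕ} (hP : P ∈ anchored k) (ha : 1 ≤ a) :
    ∑ s ∈ attachable a (lo (lastCol P)) (hi (lastCol P)), (heightN (lastCol (snoc P s)) : ℚ) =
      (a ^ 2 + a - 1) * heightN (lastCol P) + 1 := by
  have hne := lastCol_nonempty (mem_anchored.1 hP).1
  have := sum_heightN_attachable ha (lo_le_hi hne)
  rw [← heightN_eq hne] at this
  rw [sum_congr rfl fun s hs => by
    rw [lastCol_snoc P ((mem_attachable ha (lo_le_hi hne)).1 hs).1.nonempty]]
  exact_mod_cast this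

lemma count_eq (hn : 1 ≤ n) :
    count n = 1 + ∑ a ∈ Icc 1 (n - 1), (a * lastHeightSum (n - a) + count (n - a)) := by
  rw [count, card_eq_sum_ones, Nat.cast_sum, Nat.cast_one, sum_anchored hn]
  refine congrArg _ (sum_congr rfl fun a ha => ?_)
  rw [sum_congr rfl fun P hP => sum_attachable_one hP (mem_Icc.1 ha).1, sum_add_distrib,
    ← mul_sum, lastHeightSum, count, card_eq_sum_ones, Nat.cast_sum, Nat.cast_one]

lemma lastHeightSum_eq (hn : 1 ≤ n) :
    lastHeightSum n = n + ∑ a ∈ Icc 1 (n - 1),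
      ((a ^ 2 + a - 1) * lastHeightSum (n - a) + count (n - a)) := by
  have hcol : lastCol ({0} ×ˢ Icc 0 ((n : ℤ) - 1)) = Icc 0 ((n : ℤ) - 1) := by
    rw [lastCol, (isStack_singleton_product (show (0 : ℤ) ≤ n - 1 by omega)).maxX_eq,
      columnYs_singleton_product, update_self]
  have hheight : heightN (Icc 0 ((n : ℤ) - 1)) = n := by
    have := heightN_Icc (show (0 : ℤ) ≤ n - 1 by omega)
    omega
  rw [lastHeightSum, sum_anchored hn, hcol, hheight]
  refine congrArg _ (sum_congr rfl fun a ha => ?_)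
  rw [sum_congr rfl fun P hP => sum_attachable_heightN hP (mem_Icc.1 ha).1, sum_add_distrib,
    ← mul_sum, lastHeightSum, count, card_eq_sum_ones, Nat.cast_sum, Nat.cast_one]

end Recurrence

section GeneratingFunction

open PowerSeries

lemma anchored_zero : anchored 0 = ∅ :=
  eq_empty_of_forall_notMem fun P hP => by
    obtain ⟨h, hcard, -⟩ := mem_anchored.1 hP
    have := card_pos.2 h.isPolyomino.1
    omega

lemma count_zero : count 0 = 0 := by simp [count, anchored_zero]

lemma lastHeightSum_zero : lastHeightSum 0 = 0 := by simp [lastHeightSum, anchored_zero]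

lemma coeff_mk_mul_mk {R : Type*} [CommSemiring R] {u v : ℕ → R} (hu : u 0 = 0) (hv : v 0 = 0)
    (n : ℕ) :
    coeff n (PowerSeries.mk u * PowerSeries.mk v) = ∑ a ∈ Icc 1 (n - 1), u a * v (n - a) := by
  rw [coeff_mul, Nat.sum_antidiagonal_eq_sum_range_succ_mk]
  simp only [coeff_mk]
  refine (sum_subset (fun a ha => by simp only [mem_Icc, mem_range] at ha ⊢; omega)
    fun a ha ha' => ?_).symm
  simp only [mem_Icc, mem_range] at ha ha'
  rcases (by omega : a = 0 ∨ a = n) with rfl | rfl <;> simp [hu, hv]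

lemma coeff_succ_one_sub_X_mul {R : Type*} [CommRing R] (f : ℕ → R) (n : ℕ) :
    coeff (n + 1) ((1 - X) * PowerSeries.mk f) = f (n + 1) - f n := by
  rw [sub_mul, one_mul, map_sub, coeff_succ_X_mul, coeff_mk, coeff_mk]

lemma coeff_zero_one_sub_X_mul {R : Type*} [CommRing R] (f : ℕ → R) :
    coeff 0 ((1 - X) * PowerSeries.mk f) = f 0 := by
  rw [sub_mul, one_mul, map_sub, coeff_zero_X_mul, coeff_mk, sub_zero]

def ones : PowerSeries ℚ := PowerSeries.mk fun n => if n = 0 then 0 else 1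

def naturals : PowerSeries ℚ := PowerSeries.mk fun n => n

def heightWeights : PowerSeries ℚ := PowerSeries.mk fun a => if a = 0 then 0 else a ^ 2 + a - 1

lemma one_sub_X_mul_ones : (1 - X) * ones = X := by
  ext (_ | n)
  · rw [ones, coeff_zero_one_sub_X_mul, coeff_zero_X, if_pos rfl]
  · rw [ones, coeff_succ_one_sub_X_mul, coeff_X]
    rcases n with _ | n <;> simp

lemma one_sub_X_mul_naturals : (1 - X) * naturals = ones := by
  ext (_ | n)
  · rw [naturals, coeff_zero_one_sub_X_mul, ones, coeff_mk, if_pos rfl, Nat.cast_zero]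
  · rw [naturals, coeff_succ_one_sub_X_mul, ones, coeff_mk, if_neg n.succ_ne_zero]
    push_cast
    ring

lemma one_sub_X_mul_heightWeights : (1 - X) * heightWeights = 2 * naturals - X := by
  ext (_ | n)
  · rw [heightWeights, coeff_zero_one_sub_X_mul, map_sub, naturals, coeff_zero_X, if_pos rfl]
    simp
  · rw [heightWeights, coeff_succ_one_sub_X_mul, map_sub, two_mul, map_add, naturals, coeff_mk,
      coeff_X, if_neg n.succ_ne_zero]
    rcases n with _ | n
    · norm_num
    · rw [if_neg n.succ_ne_zero, if_neg (by omega)]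
      push_cast
      ring

lemma count_series :
    PowerSeries.mk count =
      ones + naturals * PowerSeries.mk lastHeightSum + ones * PowerSeries.mk count := by
  ext (_ | n)
  · simp [count_zero, ones, naturals, lastHeightSum_zero]
  · rw [coeff_mk, count_eq (by omega), map_add, map_add, ones, naturals,
      coeff_mk_mul_mk (by simp) lastHeightSum_zero, coeff_mk_mul_mk (by simp) count_zero,
      coeff_mk, if_neg (by omega), add_assoc, ← sum_add_distrib]
    refine congrArg _ (sum_congr rfl fun a ha => ?_)
    rw [if_neg (by simp at ha; omega), one_mul]

lemma lastHeightSum_series :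
    PowerSeries.mk lastHeightSum =
      naturals + heightWeights * PowerSeries.mk lastHeightSum + ones * PowerSeries.mk count := by
  ext (_ | n)
  · simp [count_zero, ones, naturals, heightWeights, lastHeightSum_zero]
  · rw [coeff_mk, lastHeightSum_eq (by omega), map_add, map_add, ones, naturals, heightWeights,
      coeff_mk_mul_mk (by simp) lastHeightSum_zero, coeff_mk_mul_mk (by simp) count_zero,
      coeff_mk, add_assoc, ← sum_add_distrib]
    refine congrArg _ (sum_congr rfl fun a ha => ?_)
    rw [if_neg (by simp at ha; omega), if_neg (by simp at ha; omega), one_mul]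

theorem count_series_eq :
    ((1 : PowerSeries ℚ) - 6 * X + 8 * X ^ 2 - X ^ 3) * PowerSeries.mk count =
      X - 3 * X ^ 2 + X ^ 3 := by
  have hD : (1 : PowerSeries ℚ) - X ≠ 0 := fun h => by
    simpa using congrArg constantCoeff h
  have hC := count_series
  have hB := lastHeightSum_series
  have h₁ := one_sub_X_mul_ones
  have h₂ := one_sub_X_mul_naturals
  have h₃ := one_sub_X_mul_heightWeights
  set C := PowerSeries.mk count
  set B := PowerSeries.mk lastHeightSum
  set D : PowerSeries ℚ := 1 - X
  -- clear denominators using `D ^ 2 * ones = D * X`, `D ^ 2 * naturals = X` and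
  -- `D ^ 3 * heightWeights = 2 * X - D ^ 2 * X`
  have s₁ : D ^ 2 * C = D * X + X * B + D * X * C := by
    linear_combination D ^ 2 * hC + D * h₁ + B * D * h₂ + B * h₁ + C * D * h₁
  have s₂ : D ^ 3 * B = D * X + (2 * X - D ^ 2 * X) * B + D ^ 2 * X * C := by
    linear_combination D ^ 3 * hB + D ^ 2 * h₂ + D * h₁ +
      B * (D ^ 2 * h₃ + 2 * D * h₂ + 2 * h₁) + C * D ^ 2 * h₁
  apply mul_left_cancel₀ hD
  linear_combination (D ^ 3 - 2 * X + D ^ 2 * X) * s₁ + X * s₂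

end GeneratingFunction

end Cheesy

/-- The area generating function of level one cheesy polyominoes is
`q(1 − 3q + q²) / (1 − 6q + 8q² − q³)`. -/
theorem stmt_3 :
    ((1 : PowerSeries ℚ) - 6 * PowerSeries.X + 8 * PowerSeries.X ^ 2
        - PowerSeries.X ^ 3)
      * PowerSeries.mk (fun n => (cheesyCount 1 n : ℚ))
    = PowerSeries.X - 3 * PowerSeries.X ^ 2 + PowerSeries.X ^ 3 := by
  simp only [Cheesy.cheesyCount_one_eq_card_anchored]
  exact Cheesy.count_series_eq
end
end
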